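/- arXiv:1503.08166 — 9 statements merged into one kernel-verified Lean document; each statement's English description precedes it below -/
import Mathlib

section
/- There exists an uncountable set A of norm-one elements of c₀(ω₁) such that ‖f − g‖ > 1 for all distinct f, g ∈ A. -/
open ZeroAtInfty Cardinal

/-- There exists an uncountable set `A` of norm-one elements of `c₀(ω₁)`
(realised as `C₀(Γ, ℝ)` for a discrete space `Γ` of cardinality `ℵ₁`)
such that `‖f − g‖ > 1` for all distinct `f, g ∈ A`. -/
theorem uncountable_one_plus_separated_c0_omega1
    (Γ : Type*) [TopologicalSpace Γ] [DiscreteTopology Γ]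
    (hΓ : #Γ = Cardinal.aleph 1) :
    ∃ A : Set C₀(Γ, ℝ), ¬ A.Countable ∧ (∀ f ∈ A, ‖f‖ = 1) ∧
      ∀ f ∈ A, ∀ g ∈ A, f ≠ g → 1 < ‖f - g‖ := by
  classical
  obtain ⟨e⟩ : Nonempty (Γ ≃ (Cardinal.aleph 1).ord.ToType) := by
    rw [← Cardinal.eq, hΓ, Cardinal.mk_ord_toType]
  -- for each γ, the set of predecessors is countable, giving an injection into ℕ
  have hchoice : ∀ γ : Γ, ∃ f : {β : Γ // e β < e γ} → ℕ, Function.Injective f := by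
    intro γ
    have hc : (e ⁻¹' Set.Iio (e γ)).Countable := by
      have h1 : (Set.Iio (e γ)).Countable := by
        rw [Cardinal.countable_iff_lt_aleph_one]
        exact Cardinal.mk_Iio_ord_toType (e γ)
      exact h1.preimage e.injective
    have : ({β : Γ | e β < e γ} : Set Γ).Countable := hc
    exact Set.countable_iff_exists_injective.mp this
  choose ι hι using hchoice
  -- the raw functions
  set F : Γ → Γ → ℝ := fun γ β =>
    if hβ : e β < e γ then -(1 / ((ι γ ⟨β, hβ⟩ : ℝ) + 2)) else if β = γ then 1 else 0
    with hF
  have hFself : ∀ γ, F γ γ = 1 := by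
    intro γ; simp [hF]
  have hFlt : ∀ γ β (hβ : e β < e γ), F γ β = -(1 / ((ι γ ⟨β, hβ⟩ : ℝ) + 2)) := by
    intro γ β hβ; simp [hF, hβ]
  have habs : ∀ γ β, |F γ β| ≤ 1 := by
    intro γ β
    rw [hF]
    dsimp only
    split_ifs with h1 h2
    · rw [abs_neg, abs_of_nonneg (by positivity)]
      rw [div_le_one (by positivity)]
      have : (0:ℝ) ≤ (ι γ ⟨β, h1⟩ : ℝ) := Nat.cast_nonneg _
      linarith
    · simp
    · simp
  have hFlt_neg : ∀ γ β (hβ : e β < e γ), F γ β < 0 := by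
    intro γ β hβ
    rw [hFlt γ β hβ]
    have : (0:ℝ) ≤ (ι γ ⟨β, hβ⟩ : ℝ) := Nat.cast_nonneg _
    have : (0:ℝ) < 1 / ((ι γ ⟨β, hβ⟩ : ℝ) + 2) := by positivity
    linarith
  have hFne : ∀ γ β, β ≠ γ → F γ β ≤ 0 := by
    intro γ β hne
    by_cases h1 : e β < e γ
    · exact le_of_lt (hFlt_neg γ β h1)
    · have : F γ β = 0 := by simp [hF, h1, hne]
      exact this.le
  -- zero at infinity
  have hzero : ∀ γ : Γ, Filter.Tendsto (F γ) (Filter.cocompact Γ) (nhds 0) := by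
    intro γ
    rw [Filter.cocompact_eq_cofinite Γ]
    rw [Metric.tendsto_nhds]
    intro ε hε
    rw [Filter.eventually_cofinite]
    have hsub : {β : Γ | ¬ dist (F γ β) 0 < ε} ⊆
        insert γ (Subtype.val '' (ι γ ⁻¹' Set.Iic ⌈1/ε⌉₊)) := by
      intro β hβ
      simp only [Set.mem_setOf_eq, Real.dist_eq, sub_zero, not_lt] at hβ
      by_cases hβγ : β = γ
      · exact Set.mem_insert_iff.mpr (Or.inl hβγ)
      · right
        have hlt : e β < e γ := by
          by_contra hne
          have : F γ β = 0 := by simp [hF, hne, hβγ]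
          rw [this] at hβ; simp at hβ; linarith
        refine ⟨⟨β, hlt⟩, ?_, rfl⟩
        have hval : |F γ β| = 1 / ((ι γ ⟨β, hlt⟩ : ℝ) + 2) := by
          rw [hFlt γ β hlt, abs_neg, abs_of_nonneg (by positivity)]
        rw [hval] at hβ
        have h2 : (0:ℝ) < (ι γ ⟨β, hlt⟩ : ℝ) + 2 := by positivity
        have h3 : (ι γ ⟨β, hlt⟩ : ℝ) + 2 ≤ 1/ε := by
          rw [le_div_iff₀ hε]
          calc (((ι γ ⟨β, hlt⟩ : ℝ) + 2)) * ε ≤ ((ι γ ⟨β, hlt⟩ : ℝ) + 2) * (1 / ((ι γ ⟨β, hlt⟩ : ℝ) + 2)) :=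
                by apply mul_le_mul_of_nonneg_left hβ (le_of_lt h2)
            _ = 1 := by field_simp
        have h4 : (ι γ ⟨β, hlt⟩ : ℝ) ≤ ⌈1/ε⌉₊ := by
          have := Nat.le_ceil (1/ε)
          linarith
        simp only [Set.mem_preimage, Set.mem_Iic]
        exact_mod_cast h4
    have hfin : (Subtype.val '' (ι γ ⁻¹' Set.Iic ⌈1/ε⌉₊)).Finite := by
      apply Set.Finite.image
      exact Set.Finite.preimage (Set.injOn_of_injective (hι γ)) (Set.finite_Iic _)
    exact Set.Finite.subset (hfin.insert γ) hsub
  -- package as C₀ elements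
  set G : Γ → C₀(Γ, ℝ) := fun γ => ⟨⟨F γ, continuous_of_discreteTopology⟩, hzero γ⟩ with hG
  have hGapp : ∀ γ β, G γ β = F γ β := fun _ _ => rfl
  -- norm bounds via BCF
  have hnorm_pt : ∀ (f : C₀(Γ, ℝ)) (β : Γ), |f β| ≤ ‖f‖ := by
    intro f β
    rw [← ZeroAtInftyContinuousMap.norm_toBCF_eq_norm]
    exact f.toBCF.norm_coe_le_norm β
  have hnorm1 : ∀ γ, ‖G γ‖ = 1 := by
    intro γ
    apply le_antisymm
    · have hne : Nonempty Γ := ⟨γ⟩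
      rw [← ZeroAtInftyContinuousMap.norm_toBCF_eq_norm]
      apply BoundedContinuousFunction.norm_le_of_nonempty.mpr
      intro β
      exact habs γ β
    · have := hnorm_pt (G γ) γ
      rw [hGapp, hFself] at this
      simpa using this
  have hGinj : Function.Injective G := by
    intro γ γ' h
    by_contra hne
    have h1 : G γ γ = G γ' γ := by rw [h]
    rw [hGapp, hGapp, hFself] at h1
    have h2 := hFne γ' γ hne
    linarith
  refine ⟨Set.range G, ?_, ?_, ?_⟩
  · intro hc
    have : (Set.univ : Set Γ).Countable := by
      have := hc.preimage hGinj
      simpa using this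
    rw [Cardinal.countable_iff_lt_aleph_one] at this
    rw [Cardinal.mk_univ, hΓ] at this
    exact lt_irrefl _ this
  · rintro f ⟨γ, rfl⟩
    exact hnorm1 γ
  · rintro f ⟨γ, rfl⟩ g ⟨γ', rfl⟩ hfg
    have hne : γ ≠ γ' := fun h => hfg (by rw [h])
    have key : ∀ a b : Γ, e b < e a → 1 < ‖G a - G b‖ := by
      intro a b hab
      have h1 : |(G a - G b) b| ≤ ‖G a - G b‖ := hnorm_pt _ b
      have h2 : (G a - G b) b = F a b - F b b := by
        rw [ZeroAtInftyContinuousMap.coe_sub]; rfl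
      rw [h2, hFself, hFlt a b hab] at h1
      have h3 : (0:ℝ) < 1 / ((ι a ⟨b, hab⟩ : ℝ) + 2) := by positivity
      have h4 : |-(1 / ((ι a ⟨b, hab⟩ : ℝ) + 2)) - 1| = 1 / ((ι a ⟨b, hab⟩ : ℝ) + 2) + 1 := by
        rw [abs_of_nonpos (by linarith)]; ring
      rw [h4] at h1
      linarith
    rcases lt_trichotomy (e γ) (e γ') with h | h | h
    · rw [← norm_neg, neg_sub]
      exact key γ' γ h
    · exact absurd (e.injective h) hne
    · exact key γ γ' h
end

section
/- For every ε > 0, every subset A of the unit sphere of c₀(ω₁) satisfying ‖x − y‖ ≥ 1 + ε for all distinct x, y ∈ A is countable. -/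
open ZeroAtInfty Cardinal

/-!
A norm-one `f ∈ c₀(Γ)` has only finitely many coordinates where `f ≥ ε/2` and finitely many
where `f ≤ -ε/2`. If two norm-one vectors never have such large coordinates of opposite signs at
the same place, then `‖f - g‖ ≤ 1 + ε/2`. Among uncountably many pairs of disjoint finite sets
`(P, N)`, a Δ-system argument on the unions `P ∪ N` finds two distinct members whose traces on the
root agree; outside the root their supports are disjoint, so they never have opposite signs.
-/

open Set

section DeltaSystem

variable {ι α : Type*}

theorem exists_not_countable_pairwiseDisjoint_of_countable_fibers {s : Set ι}
    (hs : ¬ s.Countable) (F : ι → Finset α) (hfib : ∀ x, {i ∈ s | x ∈ F i}.Countable) :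
    ∃ t ⊆ s, ¬ t.Countable ∧ t.PairwiseDisjoint F := by
  obtain ⟨t, ⟨hts, htF⟩, hmax⟩ := zorn_subset {t | t ⊆ s ∧ t.PairwiseDisjoint F}
    fun c hc hchain => ⟨⋃₀ c, ⟨sUnion_subset fun t ht => (hc ht).1,
      (pairwiseDisjoint_sUnion hchain.directedOn).2 fun t ht => (hc ht).2⟩,
      fun _ => subset_sUnion_of_mem⟩
  refine ⟨t, hts, fun ht => ?_, htF⟩
  -- A countable maximal `t` leaves room for some `i ∈ s` whose `F i` misses every `F j`, `j ∈ t`.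
  have hbad : (t ∪ ⋃ j ∈ t, ⋃ x ∈ F j, {i ∈ s | x ∈ F i}).Countable :=
    ht.union (ht.biUnion fun j _ => (F j).countable_toSet.biUnion fun x _ => hfib x)
  obtain ⟨i, his, hi⟩ := not_subset.mp fun h => hs (hbad.mono h)
  have hins : insert i t ⊆ s ∧ (insert i t).PairwiseDisjoint F :=
    ⟨insert_subset his hts, htF.insert fun j hj _ => Finset.disjoint_left.2 fun x hxi hxj =>
      hi (Or.inr (mem_biUnion hj (mem_biUnion hxj ⟨his, hxi⟩)))⟩
  exact hi (Or.inl (hmax hins (subset_insert i t) (mem_insert i t)))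

theorem exists_not_countable_pairwise_inter_subset_of_card_le [DecidableEq α] (n : ℕ)
    {s : Set ι} (hs : ¬ s.Countable) (F : ι → Finset α) (hcard : ∀ i ∈ s, (F i).card ≤ n) :
    ∃ R : Finset α, ∃ t ⊆ s, ¬ t.Countable ∧ t.Pairwise fun i j => F i ∩ F j ⊆ R := by
  induction n generalizing F s with
  | zero =>
    refine ⟨∅, s, subset_rfl, hs, fun i hi j _ _ => ?_⟩
    simp [Finset.card_eq_zero.mp (Nat.le_zero.mp (hcard i hi))]
  | succ n ih =>
    by_cases hx : ∃ x, ¬ {i ∈ s | x ∈ F i}.Countable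
    · obtain ⟨x, hx⟩ := hx
      obtain ⟨R, t, hts, ht, hR⟩ := ih hx (fun i => (F i).erase x) fun i hi => by
        rw [Finset.card_erase_of_mem hi.2]
        exact Nat.sub_le_of_le_add (hcard i hi.1)
      refine ⟨insert x R, t, hts.trans (sep_subset _ _), ht, fun i hi j hj hij y hy => ?_⟩
      rw [Finset.mem_insert]
      by_cases hyx : y = x
      · exact Or.inl hyx
      · obtain ⟨hyi, hyj⟩ := Finset.mem_inter.1 hy
        exact Or.inr (hR hi hj hij
          (Finset.mem_inter.2 ⟨Finset.mem_erase.2 ⟨hyx, hyi⟩, Finset.mem_erase.2 ⟨hyx, hyj⟩⟩))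
    · push Not at hx
      obtain ⟨t, hts, ht, htF⟩ := exists_not_countable_pairwiseDisjoint_of_countable_fibers hs F hx
      exact ⟨∅, t, hts, ht, htF.mono' fun i j h => (Finset.disjoint_iff_inter_eq_empty.mp h).le⟩

/-- The Δ-system lemma, in the weak form that allows repeated members. -/
theorem exists_not_countable_pairwise_inter_subset [DecidableEq α] {s : Set ι}
    (hs : ¬ s.Countable) (F : ι → Finset α) :
    ∃ R : Finset α, ∃ t ⊆ s, ¬ t.Countable ∧ t.Pairwise fun i j => F i ∩ F j ⊆ R := by
  obtain ⟨n, hn⟩ : ∃ n, ¬ {i ∈ s | (F i).card ≤ n}.Countable := by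
    by_contra! h
    refine hs ((countable_iUnion h).mono fun i hi => ?_)
    exact mem_iUnion.2 ⟨(F i).card, hi, le_rfl⟩
  obtain ⟨R, t, hts, ht, hR⟩ :=
    exists_not_countable_pairwise_inter_subset_of_card_le n hn F fun i hi => hi.2
  exact ⟨R, t, hts.trans (sep_subset _ _), ht, hR⟩

theorem Finset.disjoint_of_inter_subset_of_inter_eq [DecidableEq α] {P N N' R : Finset α}
    (hPN : Disjoint P N) (hR : P ∩ N' ⊆ R) (hN : N ∩ R = N' ∩ R) : Disjoint P N' :=
  Finset.disjoint_left.2 fun _ hP hN' => Finset.disjoint_left.1 hPN hP <|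
    Finset.mem_of_mem_inter_left <|
      hN ▸ Finset.mem_inter.2 ⟨hN', hR (Finset.mem_inter.2 ⟨hP, hN'⟩)⟩

theorem exists_ne_disjoint_cross_of_not_countable {s : Set ι} (hs : ¬ s.Countable)
    (P N : ι → Finset α) (hPN : ∀ i ∈ s, Disjoint (P i) (N i)) :
    ∃ i ∈ s, ∃ j ∈ s, i ≠ j ∧ Disjoint (P i) (N j) ∧ Disjoint (N i) (P j) := by
  classical
  obtain ⟨R, t, hts, ht, hR⟩ := exists_not_countable_pairwise_inter_subset hs fun i => P i ∪ N i
  have htrace : ¬ InjOn (fun i => (P i ∩ R, N i ∩ R)) t := fun hinj =>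
    ht <| MapsTo.countable_of_injOn (t := (R.powerset ×ˢ R.powerset : Finset _))
      (fun i _ => by simp) hinj (Finset.countable_toSet _)
  simp only [InjOn, Prod.mk.injEq, not_forall] at htrace
  obtain ⟨i, hi, j, hj, ⟨hP, hN⟩, hij⟩ := htrace
  have hcross : ∀ {k l}, k ∈ t → l ∈ t → k ≠ l → P k ∩ N l ⊆ R := fun hk hl hkl =>
    (Finset.inter_subset_inter Finset.subset_union_left Finset.subset_union_right).trans
      (hR hk hl hkl)
  exact ⟨i, hts hi, j, hts hj, hij,
    Finset.disjoint_of_inter_subset_of_inter_eq (hPN i (hts hi)) (hcross hi hj hij) hN,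
    (Finset.disjoint_of_inter_subset_of_inter_eq (hPN j (hts hj)) (hcross hj hi (Ne.symm hij))
      hN.symm).symm⟩

end DeltaSystem

theorem abs_sub_le_one_add_of_not_opposite {a b δ : ℝ} (ha : |a| ≤ 1) (hb : |b| ≤ 1)
    (hpos : δ ≤ a → -δ < b) (hneg : a ≤ -δ → b < δ) : |a - b| ≤ 1 + δ := by
  obtain ⟨ha₁, ha₂⟩ := abs_le.mp ha
  obtain ⟨hb₁, hb₂⟩ := abs_le.mp hb
  refine abs_le.mpr ⟨?_, ?_⟩
  · by_contra! h
    linarith [hneg (by linarith)]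
  · by_contra! h
    linarith [hpos (by linarith)]

namespace ZeroAtInftyContinuousMap

variable {α β : Type*} [TopologicalSpace α] [SeminormedAddCommGroup β]

theorem norm_coe_le_norm (f : C₀(α, β)) (x : α) : ‖f x‖ ≤ ‖f‖ :=
  f.toBCF.norm_coe_le_norm x

theorem norm_le {f : C₀(α, β)} {C : ℝ} (hC : 0 ≤ C) : ‖f‖ ≤ C ↔ ∀ x, ‖f x‖ ≤ C :=
  f.toBCF.norm_le hC

theorem finite_setOf_le_norm [DiscreteTopology α] (f : C₀(α, β)) {δ : ℝ} (hδ : 0 < δ) :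
    {x | δ ≤ ‖f x‖}.Finite := by
  obtain ⟨K, hK, hKsub⟩ :=
    Filter.mem_cocompact'.mp (zero_at_infty f (Metric.ball_mem_nhds 0 hδ))
  refine hK.finite_of_discrete.subset fun x hx => hKsub ?_
  simpa using hx

theorem finite_setOf_le_apply [DiscreteTopology α] (f : C₀(α, ℝ)) {δ : ℝ} (hδ : 0 < δ) :
    {x | δ ≤ f x}.Finite :=
  (f.finite_setOf_le_norm hδ).subset fun x (hx : δ ≤ f x) =>
    show δ ≤ |f x| from hx.trans (le_abs_self _)

theorem finite_setOf_apply_le_neg [DiscreteTopology α] (f : C₀(α, ℝ)) {δ : ℝ} (hδ : 0 < δ) :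
    {x | f x ≤ -δ}.Finite :=
  (f.finite_setOf_le_norm hδ).subset fun x (hx : f x ≤ -δ) =>
    show δ ≤ |f x| from (le_neg.mp hx).trans (neg_le_abs _)

theorem norm_sub_le_of_not_opposite {f g : C₀(α, ℝ)} (hf : ‖f‖ ≤ 1) (hg : ‖g‖ ≤ 1) {δ : ℝ}
    (hδ : 0 ≤ δ) (hpos : ∀ x, δ ≤ f x → -δ < g x) (hneg : ∀ x, f x ≤ -δ → g x < δ) :
    ‖f - g‖ ≤ 1 + δ :=
  (norm_le (by linarith)).2 fun x =>
    abs_sub_le_one_add_of_not_opposite ((norm_coe_le_norm f x).trans hf)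
      ((norm_coe_le_norm g x).trans hg) (hpos x) (hneg x)

end ZeroAtInftyContinuousMap

theorem countable_of_one_plus_eps_separated_c0_omega1_general
    (Γ : Type*) [TopologicalSpace Γ] [DiscreteTopology Γ]
    (ε : ℝ) (hε : 0 < ε) (A : Set C₀(Γ, ℝ))
    (hA : ∀ f ∈ A, ‖f‖ = 1)
    (hsep : ∀ f ∈ A, ∀ g ∈ A, f ≠ g → 1 + ε ≤ ‖f - g‖) :
    A.Countable := by
  by_contra hA_unc
  have hδ : 0 < ε / 2 := half_pos hε
  let P (f : C₀(Γ, ℝ)) := (f.finite_setOf_le_apply hδ).toFinset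
  let N (f : C₀(Γ, ℝ)) := (f.finite_setOf_apply_le_neg hδ).toFinset
  obtain ⟨f, hf, g, hg, hfg, hPN, hNP⟩ := exists_ne_disjoint_cross_of_not_countable hA_unc P N
    fun f _ => Finset.disjoint_left.2 fun γ hP hN => by
      simp only [P, N, Finite.mem_toFinset, mem_ofPred_eq] at hP hN
      linarith
  have hclose : ‖f - g‖ ≤ 1 + ε / 2 :=
    ZeroAtInftyContinuousMap.norm_sub_le_of_not_opposite (hA f hf).le (hA g hg).le hδ.le
      (fun γ hfγ => by
        by_contra! hgγ
        exact Finset.disjoint_left.1 hPN (by simpa [P] using hfγ) (by simpa [N] using hgγ))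
      (fun γ hfγ => by
        by_contra! hgγ
        exact Finset.disjoint_left.1 hNP (by simpa [N] using hfγ) (by simpa [P] using hgγ))
  linarith [hsep f hf g hg hfg]

/-- For every `ε > 0`, every subset `A` of the unit sphere of `c₀(ω₁)`
(realised as `C₀(Γ, ℝ)` for a discrete space `Γ` of cardinality `ℵ₁`)
satisfying `‖x − y‖ ≥ 1 + ε` for all distinct `x, y ∈ A` is countable. -/
theorem countable_of_one_plus_eps_separated_c0_omega1
    (Γ : Type*) [TopologicalSpace Γ] [DiscreteTopology Γ]
    (hΓ : #Γ = Cardinal.aleph 1)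
    (ε : ℝ) (hε : 0 < ε) (A : Set C₀(Γ, ℝ))
    (hA : ∀ f ∈ A, ‖f‖ = 1)
    (hsep : ∀ f ∈ A, ∀ g ∈ A, f ≠ g → 1 + ε ≤ ‖f - g‖) :
    A.Countable :=
  countable_of_one_plus_eps_separated_c0_omega1_general Γ ε hε A hA hsep
end

section
/- Let X be a real normed space and let x, y ∈ X be non-zero vectors such that ‖x‖ ≤ 1, ‖y‖ ≤ 1 and ‖x − y‖ ≥ 1. Then ‖x/‖x‖ − y/‖y‖‖ ≥ ‖x − y‖. -/
/-! Assume `‖y‖ ≤ ‖x‖` and write `u = x/‖x‖`, `v = y/‖y‖`. Splitting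
`x - y = ‖y‖ (u - v) + (‖x‖ - ‖y‖) u` gives `‖x - y‖ ≤ ‖y‖ ‖u - v‖ + ‖x‖ - ‖y‖`, and
`‖x‖ - ‖y‖ ≤ 1 - ‖y‖ ≤ (1 - ‖y‖) ‖x - y‖` because `‖x‖ ≤ 1 ≤ ‖x - y‖`. Together these give
`‖y‖ ‖x - y‖ ≤ ‖y‖ ‖u - v‖`. -/

section

variable {X : Type*} [NormedAddCommGroup X] [NormedSpace ℝ X]

lemma norm_sub_le_norm_mul_norm_normalize_sub_add_abs {x : X} (hx : x ≠ 0) (y : X) :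
    ‖x - y‖ ≤ ‖y‖ * ‖‖x‖⁻¹ • x - ‖y‖⁻¹ • y‖ + |‖x‖ - ‖y‖| := by
  set u := ‖x‖⁻¹ • x
  set v := ‖y‖⁻¹ • y
  have hx' : ‖x‖ ≠ 0 := norm_ne_zero_iff.mpr hx
  have hu : ‖u‖ = 1 := norm_smul_inv_norm hx
  have hsplit : x - y = ‖y‖ • (u - v) + (‖x‖ - ‖y‖) • u := by
    by_cases hy : y = 0
    · simp [hy, u, smul_inv_smul₀ hx']
    · simp only [u, v, smul_sub, sub_smul, smul_inv_smul₀ hx',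
        smul_inv_smul₀ (norm_ne_zero_iff.mpr hy)]
      abel
  calc ‖x - y‖ ≤ ‖‖y‖ • (u - v)‖ + ‖(‖x‖ - ‖y‖) • u‖ := hsplit ▸ norm_add_le _ _
    _ = ‖y‖ * ‖u - v‖ + |‖x‖ - ‖y‖| := by
      rw [norm_smul, norm_smul, norm_norm, Real.norm_eq_abs, hu, mul_one]

lemma norm_sub_le_norm_normalize_sub_of_norm_le {x y : X} (hy : y ≠ 0) (hyx : ‖y‖ ≤ ‖x‖)
    (hx1 : ‖x‖ ≤ 1) (hxy : 1 ≤ ‖x - y‖) :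
    ‖x - y‖ ≤ ‖‖x‖⁻¹ • x - ‖y‖⁻¹ • y‖ := by
  have hy0 : 0 < ‖y‖ := norm_pos_iff.mpr hy
  have hx : x ≠ 0 := norm_pos_iff.mp (hy0.trans_le hyx)
  have htri := norm_sub_le_norm_mul_norm_normalize_sub_add_abs hx y
  rw [abs_of_nonneg (sub_nonneg.mpr hyx)] at htri
  have hgap : ‖x‖ - ‖y‖ ≤ (1 - ‖y‖) * ‖x - y‖ := by nlinarith
  exact le_of_mul_le_mul_left (by linarith) hy0

end

/-- Let `X` be a real normed space and `x, y ∈ X` non-zero vectors with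
`‖x‖ ≤ 1`, `‖y‖ ≤ 1` and `‖x − y‖ ≥ 1`. Then `‖x/‖x‖ − y/‖y‖‖ ≥ ‖x − y‖`. -/
theorem norm_normalize_sub_normalize_ge
    (X : Type*) [NormedAddCommGroup X] [NormedSpace ℝ X]
    (x y : X) (hx : x ≠ 0) (hy : y ≠ 0)
    (hx1 : ‖x‖ ≤ 1) (hy1 : ‖y‖ ≤ 1) (hxy : 1 ≤ ‖x - y‖) :
    ‖x - y‖ ≤ ‖‖x‖⁻¹ • x - ‖y‖⁻¹ • y‖ := by
  rcases le_total ‖y‖ ‖x‖ with hyx | hxy_norm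
  · exact norm_sub_le_norm_normalize_sub_of_norm_le hy hyx hx1 hxy
  · rw [norm_sub_rev] at hxy ⊢
    rw [norm_sub_rev (‖x‖⁻¹ • x)]
    exact norm_sub_le_norm_normalize_sub_of_norm_le hx hxy_norm hy1 hxy
end

section
/- Suppose X and Y are real Banach spaces and π : X → Y is a surjective bounded linear map that is a quotient map of norm one (i.e., the induced map from X/ker(π) to Y is an isometric isomorphism). If for some ε > 0 there exists a family {y_i : i ∈ I} of unit vectors in Y with ‖y_i − y_j‖ ≥ 1 + ε for all distinct i, j ∈ I, then for every δ with 0 < δ < ε there exists a family {x_i : i ∈ I} of unit vectors in X, indexed by the same set I, with ‖x_i − x_j‖ ≥ 1 + δ for all distinct i, j ∈ I. -/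
/-- Suppose `X` and `Y` are real Banach spaces and `π : X → Y` is a surjective
bounded linear quotient map of norm one, i.e. `‖y‖ = inf {‖x‖ : π x = y}` for
every `y ∈ Y`.  If for some `ε > 0` there is a family `{y_i : i ∈ I}` of unit
vectors in `Y` with `‖y_i − y_j‖ ≥ 1 + ε` for distinct `i, j`, then for every
`0 < δ < ε` there is a family `{x_i : i ∈ I}` of unit vectors in `X` with
`‖x_i − x_j‖ ≥ 1 + δ` for all distinct `i, j`. -/
theorem separated_family_lifts_through_quotient
    (X Y : Type*) [NormedAddCommGroup X] [NormedSpace ℝ X] [CompleteSpace X]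
    [NormedAddCommGroup Y] [NormedSpace ℝ Y] [CompleteSpace Y]
    (π : X →L[ℝ] Y) (hsurj : Function.Surjective π)
    (hquot : ∀ y : Y, ‖y‖ = sInf {r : ℝ | ∃ x : X, π x = y ∧ ‖x‖ = r})
    (ε : ℝ) (hε : 0 < ε) (I : Type*) (y : I → Y)
    (hy : ∀ i, ‖y i‖ = 1)
    (hsep : ∀ i j : I, i ≠ j → 1 + ε ≤ ‖y i - y j‖)
    (δ : ℝ) (hδ0 : 0 < δ) (hδε : δ < ε) :
    ∃ x : I → X, (∀ i, ‖x i‖ = 1) ∧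
      ∀ i j : I, i ≠ j → 1 + δ ≤ ‖x i - x j‖ := by
  set η : ℝ := (ε - δ) / 2 with hη
  have hη0 : 0 < η := by rw [hη]; linarith
  -- basic facts about the preimage norm sets
  have hbdd : ∀ z : Y, BddBelow {r : ℝ | ∃ x : X, π x = z ∧ ‖x‖ = r} := by
    intro z
    exact ⟨0, fun r ⟨x, _, hx⟩ => hx ▸ norm_nonneg x⟩
  have hne : ∀ z : Y, ({r : ℝ | ∃ x : X, π x = z ∧ ‖x‖ = r}).Nonempty := by
    intro z
    obtain ⟨x, hx⟩ := hsurj z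
    exact ⟨‖x‖, x, hx, rfl⟩
  have hlow : ∀ (z : Y) (x : X), π x = z → ‖z‖ ≤ ‖x‖ := by
    intro z x hx
    rw [hquot z]
    exact csInf_le (hbdd z) ⟨x, hx, rfl⟩
  -- choose good lifts u i
  have hlift : ∀ i : I, ∃ u : X, π u = y i ∧ 1 ≤ ‖u‖ ∧ ‖u‖ ≤ 1 + η := by
    intro i
    have h1 : sInf {r : ℝ | ∃ x : X, π x = y i ∧ ‖x‖ = r} < 1 + η := by
      rw [← hquot (y i), hy i]; linarith
    obtain ⟨r, ⟨u, hu, hur⟩, hrlt⟩ := exists_lt_of_csInf_lt (hne (y i)) h1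
    refine ⟨u, hu, ?_, by rw [hur]; exact le_of_lt hrlt⟩
    have := hlow (y i) u hu
    rwa [hy i] at this
  choose u hu h1u huη using hlift
  have hupos : ∀ i, 0 < ‖u i‖ := fun i => lt_of_lt_of_le one_pos (h1u i)
  refine ⟨fun i => (‖u i‖)⁻¹ • u i, ?_, ?_⟩
  · intro i
    rw [norm_smul, norm_inv, norm_norm, inv_mul_cancel₀ (hupos i).ne']
  · intro i j hij
    have hsepu : 1 + ε ≤ ‖u i - u j‖ := by
      have hπ : π (u i - u j) = y i - y j := by rw [map_sub, hu i, hu j]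
      exact le_trans (hsep i j hij) (hlow _ _ hπ)
    have hclose : ∀ k : I, ‖(‖u k‖)⁻¹ • u k - u k‖ ≤ η := by
      intro k
      have : (‖u k‖)⁻¹ • u k - u k = ((‖u k‖)⁻¹ - 1) • u k := by
        rw [sub_smul, one_smul]
      rw [this, norm_smul, Real.norm_eq_abs]
      have hinv : (‖u k‖)⁻¹ ≤ 1 := by
        rw [inv_le_one_iff₀]; right; exact h1u k
      rw [abs_of_nonpos (by linarith), neg_sub, sub_mul, one_mul,
        inv_mul_cancel₀ (hupos k).ne']
      have := huη k
      linarith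
    have key : ‖u i - u j‖ ≤ ‖(‖u i‖)⁻¹ • u i - (‖u j‖)⁻¹ • u j‖ + 2 * η := by
      have h1 := hclose i
      have h2 := hclose j
      have : ‖u i - u j‖ ≤ ‖u i - (‖u i‖)⁻¹ • u i‖ +
          ‖(‖u i‖)⁻¹ • u i - (‖u j‖)⁻¹ • u j‖ + ‖(‖u j‖)⁻¹ • u j - u j‖ :=
        norm_sub_le_norm_sub_add_norm_sub _ _ _ |>.trans (by
          gcongr; exact norm_sub_le_norm_sub_add_norm_sub _ _ _)
      rw [norm_sub_rev (u i) ((‖u i‖)⁻¹ • u i)] at this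
      linarith
    have : 1 + ε ≤ ‖(‖u i‖)⁻¹ • u i - (‖u j‖)⁻¹ • u j‖ + 2 * η := le_trans hsepu key
    have hηδ : 2 * η = ε - δ := by rw [hη]; ring
    linarith
end

section
/- Let X be a real Banach space and let M ⊆ X be a closed reflexive subspace, and let π : X → X/M be the quotient map. If {y_i : i ∈ I} is a family of unit vectors in X/M with ‖y_i − y_j‖ > 1 for all distinct i, j ∈ I, then there exists a family {x_i : i ∈ I} of unit vectors in X with π(x_i) = y_i and ‖x_i − x_j‖ > 1 for all distinct i, j ∈ I. In particular, if the unit sphere of X/M contains a (1+)-separated subset of cardinality κ, then so does the unit sphere of X. -/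
/-!
A reflexive subspace `M` is proximinal: its closed balls are weakly compact and `m ↦ ‖z - m‖`,
being convex and continuous, is weakly lower semicontinuous (Mazur), so it attains its minimum
on a large enough ball, and that minimum is its infimum over `M`. Hence every `y ∈ X/M` has a
lift `x` with `‖x‖ = ‖y‖`, and since the quotient map is 1-Lipschitz, lifting a (1+)-separated
family of unit vectors this way keeps it (1+)-separated.
-/

/-- A real normed space is reflexive if the canonical embedding into its
bidual is surjective. -/
def IsReflexiveSpace (M : Type*) [NormedAddCommGroup M] [NormedSpace ℝ M] : Prop :=
  Function.Surjective (NormedSpace.inclusionInDoubleDual ℝ M)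

open Metric Set

theorem ConvexOn.lowerSemicontinuous_comp_toWeakSpace_symm {E : Type*} [AddCommGroup E]
    [Module ℝ E] [TopologicalSpace E] [IsTopologicalAddGroup E] [ContinuousSMul ℝ E]
    [LocallyConvexSpace ℝ E] {f : E → ℝ} (hconv : ConvexOn ℝ univ f)
    (hf : LowerSemicontinuous f) :
    LowerSemicontinuous (f ∘ (toWeakSpace ℝ E).symm) := by
  refine lowerSemicontinuous_iff_isClosed_preimage.2 fun c => ?_
  have hconvex : Convex ℝ (f ⁻¹' Iic c) := by
    have := hconv.convex_le c
    simp only [mem_univ, true_and] at this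
    exact this
  have hclosed := hconvex.toWeakSpace_closure ℝ
  rw [(hf.isClosed_preimage c).closure_eq] at hclosed
  rw [preimage_comp, ← LinearEquiv.image_eq_preimage_symm, hclosed]
  exact isClosed_closure

theorem IsReflexiveSpace.isCompact_toWeakSpace_closedBall {M : Type*} [NormedAddCommGroup M]
    [NormedSpace ℝ M] (hM : IsReflexiveSpace M) (x : M) (r : ℝ) :
    IsCompact (toWeakSpace ℝ M '' closedBall x r) := by
  have hclosed := (convex_closedBall x r).toWeakSpace_closure ℝ
  rw [isClosed_closedBall.closure_eq] at hclosed
  rw [hclosed]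
  refine NormedSpace.isCompact_closure_of_isBounded ℝ M _ ?_ ?_
  · rw [(toWeakSpace ℝ M).injective.preimage_image]
    exact isBounded_closedBall
  · intro Φ _
    obtain ⟨m, hm⟩ := hM (WeakDual.toStrongDual Φ)
    exact ⟨toWeakSpace ℝ M m, congrArg StrongDual.toWeakDual hm⟩

theorem Submodule.exists_forall_norm_sub_le_of_isReflexive {X : Type*} [NormedAddCommGroup X]
    [NormedSpace ℝ X] (M : Submodule ℝ X) (hM : IsReflexiveSpace M) (z : X) :
    ∃ m₀ ∈ M, ∀ m ∈ M, ‖z - m₀‖ ≤ ‖z - m‖ := by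
  set f : M → ℝ := fun m => dist (m : X) z
  have hlsc : LowerSemicontinuous (f ∘ (toWeakSpace ℝ M).symm) :=
    ((convexOn_univ_dist z).comp_linearMap M.subtype).lowerSemicontinuous_comp_toWeakSpace_symm
      (by fun_prop : Continuous f).lowerSemicontinuous
  -- Points of `M` outside the ball of radius `2 * ‖z‖` are farther from `z` than `0` is.
  have hzero : toWeakSpace ℝ M 0 ∈ toWeakSpace ℝ M '' closedBall 0 (2 * ‖z‖) :=
    mem_image_of_mem _ (mem_closedBall_self (by positivity))
  obtain ⟨-, ⟨m₀, -, rfl⟩, hmin⟩ := LowerSemicontinuousOn.exists_isMinOn ⟨_, hzero⟩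
    (hM.isCompact_toWeakSpace_closedBall 0 (2 * ‖z‖)) (hlsc.lowerSemicontinuousOn _)
  have hmin_ball : ∀ m ∈ M, ‖m‖ ≤ 2 * ‖z‖ → dist (m₀ : X) z ≤ dist m z := by
    intro m hm hmz
    have hball : (⟨m, hm⟩ : M) ∈ closedBall 0 (2 * ‖z‖) := mem_closedBall_zero_iff.2 hmz
    simpa [f] using hmin (mem_image_of_mem _ hball)
  refine ⟨m₀, m₀.2, fun m hm => ?_⟩
  simp only [← dist_eq_norm, dist_comm z]
  rcases le_or_gt ‖m‖ (2 * ‖z‖) with hmz | hmz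
  · exact hmin_ball m hm hmz
  · calc dist (m₀ : X) z ≤ dist 0 z := hmin_ball 0 M.zero_mem (by simp)
      _ = ‖z‖ := dist_zero_left z
      _ ≤ ‖m‖ - ‖z‖ := by linarith
      _ ≤ dist m z := by rw [dist_eq_norm]; exact norm_sub_norm_le m z

theorem Submodule.exists_mkQ_eq_norm_eq_of_isReflexive {X : Type*} [NormedAddCommGroup X]
    [NormedSpace ℝ X] (M : Submodule ℝ X) (hM : IsReflexiveSpace M) (y : X ⧸ M) :
    ∃ x, M.mkQ x = y ∧ ‖x‖ = ‖y‖ := by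
  obtain ⟨z, rfl⟩ := M.mkQ_surjective y
  obtain ⟨m₀, hm₀, hnearest⟩ := M.exists_forall_norm_sub_le_of_isReflexive hM z
  have hmkQ : M.mkQ (z - m₀) = M.mkQ z := by simpa [sub_eq_zero] using hm₀
  refine ⟨z - m₀, hmkQ, le_antisymm ?_ (hmkQ ▸ Submodule.Quotient.norm_mk_le M _)⟩
  refine QuotientAddGroup.le_norm_iff.2 fun w hw => ?_
  have hzw : z - w ∈ M := (Submodule.Quotient.eq M).1 hw.symm
  simpa using hnearest _ hzw

theorem separated_family_lifts_through_quotient_by_reflexive_general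
    (X : Type*) [NormedAddCommGroup X] [NormedSpace ℝ X]
    (M : Submodule ℝ X)
    (hrefl : IsReflexiveSpace M)
    (I : Type*) (y : I → X ⧸ M)
    (hy : ∀ i, ‖y i‖ = 1)
    (hsep : ∀ i j : I, i ≠ j → 1 < ‖y i - y j‖) :
    ∃ x : I → X, (∀ i, ‖x i‖ = 1 ∧ M.mkQ (x i) = y i) ∧
      ∀ i j : I, i ≠ j → 1 < ‖x i - x j‖ := by
  choose x hxy hnorm using fun i => M.exists_mkQ_eq_norm_eq_of_isReflexive hrefl (y i)
  refine ⟨x, fun i => ⟨(hnorm i).trans (hy i), hxy i⟩, fun i j hij => ?_⟩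
  calc (1 : ℝ) < ‖y i - y j‖ := hsep i j hij
    _ = ‖M.mkQ (x i - x j)‖ := by rw [map_sub, hxy i, hxy j]
    _ ≤ ‖x i - x j‖ := Submodule.Quotient.norm_mk_le M _

/-- Let `X` be a real Banach space, `M ⊆ X` a closed reflexive subspace, and
`π : X → X/M` the quotient map.  Any (1+)-separated family of unit vectors in
`X/M` lifts to a (1+)-separated family of unit vectors in `X` (along `π`),
indexed by the same set. -/
theorem separated_family_lifts_through_quotient_by_reflexive
    (X : Type*) [NormedAddCommGroup X] [NormedSpace ℝ X] [CompleteSpace X]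
    (M : Submodule ℝ X) [IsClosed (M : Set X)]
    (hrefl : IsReflexiveSpace M)
    (I : Type*) (y : I → X ⧸ M)
    (hy : ∀ i, ‖y i‖ = 1)
    (hsep : ∀ i j : I, i ≠ j → 1 < ‖y i - y j‖) :
    ∃ x : I → X, (∀ i, ‖x i‖ = 1 ∧ M.mkQ (x i) = y i) ∧
      ∀ i j : I, i ≠ j → 1 < ‖x i - x j‖ :=
  separated_family_lifts_through_quotient_by_reflexive_general X M hrefl I y hy hsep
end

section
/- Let K be a compact Hausdorff space that is not hereditarily separable, i.e., K contains a subspace that is not separable. Then there exists an uncountable set A of norm-one functions in C(K) such that ‖f − g‖ ≥ 2 (equivalently, ‖f − g‖ = 2) for all distinct f, g ∈ A. In particular, for some ε > 0 the unit sphere of C(K) contains an uncountable (1+ε)-separated subset. -/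
open Set TopologicalSpace Cardinal Ordinal

open Classical in
/-- A transfinite "left-separated" sequence in `S`: at each stage pick a point of `S`
outside the closure of the previously chosen points (if possible). -/
noncomputable def leftSepSeq {K : Type*} [TopologicalSpace K] [Nonempty K] (S : Set K) :
    Ordinal → K :=
  Ordinal.lt_wf.fix (fun o ih =>
    if h : (S \ closure (Set.range fun p : Set.Iio o => ih p.1 p.2)).Nonempty
    then h.choose else Classical.arbitrary K)

set_option maxHeartbeats 1000000 in
lemma leftSepSeq_spec {K : Type*} [TopologicalSpace K] [Nonempty K] {S : Set K}
    (hS : ¬ TopologicalSpace.IsSeparable S) {o : Ordinal} (ho : (Set.Iio o).Countable) :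
    leftSepSeq S o ∈ S \ closure (leftSepSeq S '' Set.Iio o) := by
  have hrange : (Set.range fun p : Set.Iio o => leftSepSeq S p.1) =
      leftSepSeq S '' Set.Iio o := by
    ext x; simp [Set.range, Set.image]
  have hcnt : (leftSepSeq S '' Set.Iio o).Countable := ho.image _
  have hne : (S \ closure (leftSepSeq S '' Set.Iio o)).Nonempty := by
    by_contra h
    apply hS
    refine ⟨leftSepSeq S '' Set.Iio o, hcnt, ?_⟩
    intro x hx
    by_contra hx'
    exact h ⟨x, hx, hx'⟩
  classical
  have hne' : (S \ closure (Set.range fun p : Set.Iio o => leftSepSeq S p.1)).Nonempty := by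
    rw [hrange]; exact hne
  unfold leftSepSeq at hrange hne' ⊢
  rw [Ordinal.lt_wf.fix_eq]
  beta_reduce
  rw [dif_pos hne']
  have h2 := hne'.choose_spec.2
  refine ⟨hne'.choose_spec.1, fun hmem => h2 ?_⟩
  rw [← hrange] at hmem
  exact hmem

/-- Let `K` be a compact Hausdorff space that is not hereditarily separable,
i.e. some subspace of `K` is not separable.  Then there exists an uncountable
set `A` of norm-one functions in `C(K)` with `‖f − g‖ = 2` for all distinct
`f, g ∈ A`. -/
theorem uncountable_equilateral_of_not_hereditarily_separable
    (K : Type*) [TopologicalSpace K] [CompactSpace K] [T2Space K]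
    (hK : ∃ S : Set K, ¬ TopologicalSpace.IsSeparable S) :
    ∃ A : Set C(K, ℝ), ¬ A.Countable ∧ (∀ f ∈ A, ‖f‖ = 1) ∧
      ∀ f ∈ A, ∀ g ∈ A, f ≠ g → ‖f - g‖ = 2 := by
  obtain ⟨S, hS⟩ := hK
  haveI : Nonempty K := by
    by_contra h
    rw [not_nonempty_iff] at h
    exact hS ⟨∅, Set.countable_empty, by simp [Set.eq_empty_of_isEmpty S]⟩
  -- index set: countable ordinals
  set I : Set Ordinal := Set.Iio (Cardinal.aleph 1).ord with hI
  have hIcnt : ∀ o ∈ I, (Set.Iio o).Countable := by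
    intro o ho
    rw [Cardinal.countable_iff_lt_aleph_one, Ordinal.mk_Iio_ordinal]
    have : o.card < Cardinal.aleph 1 := (Cardinal.lt_ord).1 ho
    calc Cardinal.lift.{u_1 + 1} o.card < Cardinal.lift.{u_1+1} (Cardinal.aleph 1) := by
            exact_mod_cast Cardinal.lift_lt.2 this
      _ = Cardinal.aleph 1 := by simp
  set x : Ordinal → K := leftSepSeq S with hx
  have hspec : ∀ o ∈ I, x o ∈ S \ closure (x '' Set.Iio o) :=
    fun o ho => leftSepSeq_spec hS (hIcnt o ho)
  -- choose Urysohn functions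
  have hU : ∀ o : I, ∃ f : C(K, ℝ), Set.EqOn f 0 (closure (x '' Set.Iio o.1)) ∧
      Set.EqOn f 1 {x o.1} ∧ ∀ y, f y ∈ Set.Icc (0 : ℝ) 1 := by
    intro ⟨o, ho⟩
    refine exists_continuous_zero_one_of_isClosed isClosed_closure isClosed_singleton ?_
    rw [Set.disjoint_singleton_right]
    exact (hspec o ho).2
  choose h h0 h1 hIcc using hU
  -- the equilateral family
  set g : I → C(K, ℝ) := fun o => (2 : ℝ) • h o - 1 with hg
  have hg_apply : ∀ (o : I) (y : K), g o y = 2 * h o y - 1 := by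
    intro o y; simp [hg]
  have hg_at : ∀ o : I, g o (x o.1) = 1 := by
    intro o
    rw [hg_apply, h1 o rfl]
    norm_num
  have hg_earlier : ∀ o o' : I, o'.1 < o.1 → g o (x o'.1) = -1 := by
    intro o o' hlt
    rw [hg_apply, h0 o (subset_closure ⟨o'.1, hlt, rfl⟩)]
    norm_num
  have hg_bound : ∀ (o : I) (y : K), |g o y| ≤ 1 := by
    intro o y
    rw [hg_apply]
    obtain ⟨h1', h2'⟩ := hIcc o y
    rw [abs_le]; constructor <;> linarith
  have hnorm : ∀ o : I, ‖g o‖ = 1 := by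
    intro o
    apply le_antisymm
    · rw [ContinuousMap.norm_le _ zero_le_one]
      intro y
      simpa [Real.norm_eq_abs] using hg_bound o y
    · calc (1 : ℝ) = ‖g o (x o.1)‖ := by rw [hg_at]; simp
        _ ≤ ‖g o‖ := (g o).norm_coe_le_norm _
  have hdist : ∀ o o' : I, o'.1 < o.1 → ‖g o - g o'‖ = 2 := by
    intro o o' hlt
    apply le_antisymm
    · calc ‖g o - g o'‖ ≤ ‖g o‖ + ‖g o'‖ := norm_sub_le _ _
        _ = 2 := by rw [hnorm, hnorm]; norm_num
    · calc (2 : ℝ) = ‖(g o - g o') (x o'.1)‖ := by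
            simp only [ContinuousMap.sub_apply]
            rw [hg_earlier o o' hlt, hg_at o']
            norm_num
        _ ≤ ‖g o - g o'‖ := (g o - g o').norm_coe_le_norm _
  have hginj : Function.Injective g := by
    intro o o' he
    by_contra hne
    have hne' : o.1 ≠ o'.1 := fun h' => hne (Subtype.ext h')
    rcases hne'.lt_or_gt with hlt | hlt
    · have := hdist o' o hlt
      rw [← he] at this; simp at this
    · have := hdist o o' hlt
      rw [he] at this; simp at this
  refine ⟨Set.range g, ?_, ?_, ?_⟩
  · intro hcnt
    haveI : Countable (Set.range g) := hcnt.to_subtype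
    haveI : Countable I := Function.Injective.countable
      (f := fun o : I => (⟨g o, Set.mem_range_self o⟩ : Set.range g))
      (fun a b hab => hginj (Subtype.ext_iff.1 hab))
    have : (I : Set Ordinal).Countable := I.to_countable
    rw [Cardinal.countable_iff_lt_aleph_one, hI, Ordinal.mk_Iio_ordinal] at this
    simp only [Cardinal.card_ord] at this
    have : Cardinal.aleph 1 < Cardinal.aleph 1 := by
      calc Cardinal.aleph 1 ≤ Cardinal.lift.{u_1+1} (Cardinal.aleph 1) := by simp
        _ < Cardinal.aleph 1 := this
    exact lt_irrefl _ this
  · rintro f ⟨o, rfl⟩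
    exact hnorm o
  · rintro f ⟨o, rfl⟩ f' ⟨o', rfl⟩ hne
    have hne' : o.1 ≠ o'.1 := by
      intro h'; exact hne (congrArg g (Subtype.ext h'))
    rcases hne'.lt_or_gt with hlt | hlt
    · rw [← norm_neg]; simpa using hdist o' o hlt
    · exact hdist o o' hlt
end

section
/- Let K be a compact Hausdorff space and let μ be a positive regular Borel (Radon) measure on K such that L¹(μ) is non-separable. Then for every δ with 0 < δ < √2 − 1 there exists a set A of norm-one functions in C(K), of cardinality equal to the density character of L¹(μ), such that ‖f − g‖ ≥ 1 + δ for all distinct f, g ∈ A. In particular, the unit sphere of C(K) contains an uncountable (1+δ)-separated subset. -/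
open Cardinal MeasureTheory

/-- The density character of a topological space: the least cardinality of a
dense subset. -/
noncomputable def densityCharacter (X : Type*) [TopologicalSpace X] : Cardinal :=
  sInf { c : Cardinal | ∃ s : Set X, Dense s ∧ #s = c }

/-!
Call `S ⊆ K` `κ`-large if for some `c > 0` every `c`-net of the measurable subsets of `S`
(for the pseudometric `μ (A ∆ B)`) has at least `κ` members. A maximal `c`-separated family in a
`κ`-large set has `κ` members. For each member `A`, inner regularity and Urysohn's lemma give a
norm-one `f_A ∈ C(K)` equal to `1` on most of `A` and to `-1` on most of its complement; if
`A \ B` is larger than the two error terms, then `f_A = 1` and `f_B = -1` at some point, so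
`‖f_A - f_B‖ = 2`.

Indicators of the members of `1/n`-nets span a dense subspace of `L¹(μ)`, so `d(L¹(μ))` is
bounded by the sizes of such nets. Hence either `K` is `d(L¹(μ))`-large, or these sizes give
regular cardinals `τ n`, cofinal in `d(L¹(μ))`, for which `K` is large. An exhaustion argument
splits `K` into disjoint pieces `S n`, each `τ n`-large, and the functions built in all pieces
form a `2`-separated set of cardinality `∑ τ n = d(L¹(μ))`.
-/

open Set Filter Topology Function
open scoped ENNReal symmDiff

theorem densityCharacter_le_mk {X : Type*} [TopologicalSpace X] {s : Set X} (hs : Dense s) :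
    densityCharacter X ≤ #s :=
  csInf_le' ⟨s, hs, rfl⟩

theorem aleph0_lt_densityCharacter {X : Type*} [TopologicalSpace X]
    (h : ¬ TopologicalSpace.SeparableSpace X) : ℵ₀ < densityCharacter X := by
  by_contra! hle
  obtain ⟨s, hs, hcard⟩ : densityCharacter X ∈ {c | ∃ s : Set X, Dense s ∧ #s = c} :=
    csInf_mem ⟨_, univ, dense_univ, rfl⟩
  exact h ⟨s, mk_le_aleph0_iff.1 (hcard.trans_le hle), hs⟩

theorem Set.symmDiff_union_subset_inter_sdiff {α : Type*} (E T X Y : Set α) :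
    E ∆ (X ∪ Y) ⊆ ((E ∩ T) ∆ X) ∪ ((E \ T) ∆ Y) := by
  simpa only [inter_union_sdiff] using union_symmDiff_union_subset (s := E ∩ T) (t := E \ T)

theorem Set.exists_maximal_pairwise {β : Type*} {X M₀ : Set β} {r : β → β → Prop}
    [Std.Symm r] (hM₀X : M₀ ⊆ X) (hM₀ : M₀.Pairwise r) :
    ∃ M, M₀ ⊆ M ∧ M ⊆ X ∧ M.Pairwise r ∧ ∀ x ∈ X, ∃ y ∈ M, x = y ∨ ¬ r x y := by
  obtain ⟨M, hM₀M, hM⟩ := zorn_subset_nonempty {M | M ⊆ X ∧ M.Pairwise r}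
    (fun C hCX hC _ ↦ ⟨⋃₀ C, ⟨sUnion_subset fun M hM ↦ (hCX hM).1,
      hC.pairwise_sUnion.2 fun M hM ↦ (hCX hM).2⟩, fun _ ↦ subset_sUnion_of_mem⟩) M₀ ⟨hM₀X, hM₀⟩
  refine ⟨M, hM₀M, hM.prop.1, hM.prop.2, fun x hx ↦ ?_⟩
  by_contra! hxM
  have hins : insert x M ⊆ M := hM.le_of_ge ⟨insert_subset hx hM.prop.1,
    pairwise_insert_of_symm.2 ⟨hM.prop.2, fun y hy _ ↦ (hxM y hy).2⟩⟩ (subset_insert x M)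
  exact (hxM x (hins (mem_insert x M))).1 rfl

namespace MeasureTheory

section Lp

variable {α E : Type*} [MeasurableSpace α] {μ : Measure α} {p : ℝ≥0∞} [Fact (1 ≤ p)]

theorem continuous_indicatorConstLp [NormedAddCommGroup E] {s : Set α} (hs : MeasurableSet s)
    (hμs : μ s ≠ ∞) : Continuous fun c : E ↦ indicatorConstLp p hs hμs c :=
  AddMonoidHomClass.continuous_of_bound
    (AddMonoidHom.mk' (fun c : E ↦ indicatorConstLp p hs hμs c) fun _ _ ↦
      indicatorConstLp_add.symm)
    _ fun _ ↦ (norm_indicatorConstLp_le (hs := hs) (hμs := hμs)).trans_eq (mul_comm _ _)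

theorem densityCharacter_Lp_le_of_measureDense (hp : p ≠ ∞) {𝒜 : Set (Set α)}
    (h𝒜 : μ.MeasureDense 𝒜) : densityCharacter (Lp ℝ p μ) ≤ max ℵ₀ #𝒜 := by
  have : Fact (p ≠ ∞) := ⟨hp⟩
  let 𝒜₀ : Set (Set α) := {s | s ∈ 𝒜 ∧ μ s ≠ ∞}
  let ind : ℚ × 𝒜₀ → Lp ℝ p μ := fun x ↦
    indicatorConstLp p (h𝒜.measurable _ x.2.2.1) x.2.2.2 (x.1 : ℝ)
  let T := AddMonoidHom.mrange (FreeAddMonoid.lift ind)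
  have hind : ∀ x, ind x ∈ T := fun x ↦ ⟨FreeAddMonoid.of x, FreeAddMonoid.lift_eval_of ind x⟩
  have hcard : #T ≤ max ℵ₀ #𝒜 := calc
    #T ≤ #(List (ℚ × 𝒜₀)) := mk_range_le
    _ ≤ max ℵ₀ #(ℚ × 𝒜₀) := mk_list_le_max _
    _ ≤ max ℵ₀ #𝒜 := by
      rw [mk_prod, lift_uzero, mk_eq_aleph0 ℚ, lift_aleph0]
      exact max_le le_sup_left ((mul_le_max_of_aleph0_le_left le_rfl).trans
        (max_le_max_left _ (mk_le_mk_of_subset fun _ h ↦ h.1)))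
  have hdense : Dense (T : Set (Lp ℝ p μ)) := by
    refine fun f ↦ Lp.induction hp (fun f ↦ f ∈ T.topologicalClosure) ?_
      (fun _ _ _ _ _ hf hg ↦ add_mem hf hg) T.isClosed_topologicalClosure f
    intro c s hs hμs
    rw [Lp.simpleFunc.coe_indicatorConst]
    refine Rat.denseRange_cast.induction_on c
      (isClosed_closure.preimage (continuous_indicatorConstLp hs hμs.ne)) fun q ↦ ?_
    refine closure_mono ?_ (h𝒜.indicatorConstLp_subset_closure p (q : ℝ) ⟨s, hs, hμs.ne, rfl⟩)
    rintro _ ⟨t, ht, hμt, rfl⟩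
    exact hind (q, ⟨t, ht, hμt⟩)
  exact (densityCharacter_le_mk hdense).trans hcard

end Lp

section NetLarge

variable {α : Type*} [MeasurableSpace α] {μ : Measure α} {S T : Set α} {κ κ' : Cardinal}
  {τ : ℕ → Cardinal}

def IsMeasureNet (μ : Measure α) (S : Set α) (c : ℝ≥0∞) (D : Set (Set α)) : Prop :=
  (∀ A ∈ D, MeasurableSet A ∧ A ⊆ S) ∧
    ∀ E, MeasurableSet E → E ⊆ S → ∃ A ∈ D, μ (E ∆ A) ≤ c

def IsNetLarge (μ : Measure α) (S : Set α) (κ : Cardinal) : Prop :=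
  ∃ c, 0 < c ∧ ∀ D, IsMeasureNet μ S c D → κ ≤ #D

theorem not_isNetLarge_iff :
    ¬ IsNetLarge μ S κ ↔ ∀ c, 0 < c → ∃ D, IsMeasureNet μ S c D ∧ #D < κ := by
  simp only [IsNetLarge, not_exists, not_and, not_forall, not_le, exists_prop]

theorem exists_isMeasureNet_inv_nat_of_not_isNetLarge (h : ¬ IsNetLarge μ univ κ) :
    ∃ D : ℕ → Set (Set α),
      (∀ n : ℕ, IsMeasureNet μ univ (n : ℝ≥0∞)⁻¹ (D n)) ∧ ∀ n, #(D n) < κ := by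
  choose D hD hDκ using fun n : ℕ ↦
    not_isNetLarge_iff.1 h (n : ℝ≥0∞)⁻¹ (ENNReal.inv_pos.2 (ENNReal.natCast_ne_top n))
  exact ⟨D, hD, hDκ⟩

theorem measureDense_iUnion_of_isMeasureNet {D : ℕ → Set (Set α)}
    (hD : ∀ n : ℕ, IsMeasureNet μ univ (n : ℝ≥0∞)⁻¹ (D n)) : μ.MeasureDense (⋃ n, D n) where
  measurable A hA := by
    obtain ⟨n, hn⟩ := mem_iUnion.1 hA
    exact ((hD n).1 A hn).1
  approx E hE _ ε hε := by
    obtain ⟨n, hn⟩ := ENNReal.exists_inv_nat_lt (ENNReal.ofReal_pos.2 hε).ne'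
    obtain ⟨A, hA, hEA⟩ := (hD n).2 E hE (subset_univ E)
    exact ⟨A, mem_iUnion.2 ⟨n, hA⟩, hEA.trans_lt hn⟩

theorem densityCharacter_Lp_le_of_isMeasureNet {D : ℕ → Set (Set α)}
    (hD : ∀ n : ℕ, IsMeasureNet μ univ (n : ℝ≥0∞)⁻¹ (D n)) :
    densityCharacter (Lp ℝ 1 μ) ≤ max ℵ₀ (⨆ n, #(D n)) := by
  refine (densityCharacter_Lp_le_of_measureDense ENNReal.one_ne_top
    (measureDense_iUnion_of_isMeasureNet hD)).trans (max_le le_sup_left ?_)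
  have := mk_iUnion_le_lift D
  simp only [lift_uzero, mk_nat, lift_aleph0] at this
  exact this.trans (mul_le_max_of_aleph0_le_left le_rfl)

theorem isNetLarge_univ_of_isRegular (hκ : ℵ₀ < κ) (hreg : κ.IsRegular)
    (hκd : κ ≤ densityCharacter (Lp ℝ 1 μ)) : IsNetLarge μ univ κ := by
  by_contra h
  obtain ⟨D, hD, hDκ⟩ := exists_isMeasureNet_inv_nat_of_not_isNetLarge h
  refine (hκd.trans (densityCharacter_Lp_le_of_isMeasureNet hD)).not_gt (max_lt hκ ?_)
  exact lift_iSup_lt_of_lt_cof_ord (by rwa [lift_uzero, hreg.cof_ord, mk_nat, lift_aleph0]) hDκ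

/-- If `α` is not `d(L¹(μ))`-large, the sizes of `1/n`-nets are cofinal in `d(L¹(μ))`, and the
successors of their partial suprema are regular. -/
theorem exists_monotone_isNetLarge_univ (hκ : ℵ₀ < densityCharacter (Lp ℝ 1 μ)) :
    ∃ τ : ℕ → Cardinal, Monotone τ ∧ (∀ n, ℵ₀ ≤ τ n) ∧
      (∀ n, τ n ≤ densityCharacter (Lp ℝ 1 μ)) ∧ (∀ n, IsNetLarge μ univ (τ n)) ∧
      densityCharacter (Lp ℝ 1 μ) ≤ ⨆ n, τ n := by
  set κ := densityCharacter (Lp ℝ 1 μ)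
  by_cases hlarge : IsNetLarge μ univ κ
  · exact ⟨fun _ ↦ κ, monotone_const, fun _ ↦ hκ.le, fun _ ↦ le_rfl, fun _ ↦ hlarge,
      le_ciSup bddAbove_of_small 0⟩
  obtain ⟨D, hD, hDκ⟩ := exists_isMeasureNet_inv_nat_of_not_isNetLarge hlarge
  have hsup : κ ≤ ⨆ n, #(D n) :=
    (le_max_iff.1 (densityCharacter_Lp_le_of_isMeasureNet hD)).resolve_left hκ.not_ge
  set a : ℕ → Cardinal := fun n ↦ ℵ₀ ⊔ (Finset.range (n + 1)).sup fun i ↦ #(D i)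
  have ha : ∀ n, a n < κ := fun n ↦
    max_lt hκ ((Finset.sup_lt_iff (hκ.trans_le' bot_le)).2 fun i _ ↦ hDκ i)
  refine ⟨fun n ↦ Order.succ (a n), fun m n hmn ↦ Order.succ_le_succ (sup_le_sup_left
      (Finset.sup_mono (Finset.range_subset_range.2 (by omega))) ℵ₀),
    fun n ↦ le_sup_left.trans (Order.le_succ _), fun n ↦ Order.succ_le_of_lt (ha n),
    fun n ↦ isNetLarge_univ_of_isRegular (le_sup_left.trans_lt (Order.lt_succ _))
      (isRegular_succ le_sup_left) (Order.succ_le_of_lt (ha n)),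
    hsup.trans (ciSup_mono bddAbove_of_small fun n ↦ ?_)⟩
  exact ((Finset.le_sup (f := fun i ↦ #(D i)) (Finset.self_mem_range_succ n)).trans
    le_sup_right).trans (Order.le_succ (a n))

theorem IsNetLarge.of_le (hκ : κ' ≤ κ) (h : IsNetLarge μ S κ) : IsNetLarge μ S κ' :=
  let ⟨c, hc, hS⟩ := h
  ⟨c, hc, fun D hD ↦ hκ.trans (hS D hD)⟩

theorem IsNetLarge.exists_split (hS : MeasurableSet S) (hκ : ℵ₀ ≤ κ) (h : IsNetLarge μ S κ) :
    ∃ E ⊆ S, MeasurableSet E ∧ 0 < μ E ∧ 0 < μ (S \ E) := by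
  by_contra! hsplit
  obtain ⟨c, hc, hlarge⟩ := h
  have hnet : IsMeasureNet μ S c {∅, S} := by
    refine ⟨by simp [hS], fun E hE hES ↦ ?_⟩
    rcases eq_zero_or_pos (μ E) with hE0 | hEpos
    · exact ⟨∅, mem_insert _ _, by rw [← bot_eq_empty, symmDiff_bot, hE0]; exact zero_le⟩
    · refine ⟨S, mem_insert_of_mem _ rfl, ?_⟩
      rw [symmDiff_of_le hES]
      exact (hsplit E hES hE hEpos).trans zero_le
  exact (hκ.trans (hlarge _ hnet)).not_gt (toFinite _).lt_aleph0

/-- A maximal `c`-separated family is a `c`-net; starting it from `∅` makes all its other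
members have measure larger than `c`. -/
theorem IsNetLarge.exists_separated (hκ : ℵ₀ ≤ κ) (h : IsNetLarge μ S κ) :
    ∃ c, 0 < c ∧ ∃ P : Set (Set α), #P = κ ∧ (∀ A ∈ P, MeasurableSet A ∧ A ⊆ S ∧ c < μ A) ∧
      P.Pairwise fun A B ↦ c < μ (A ∆ B) := by
  obtain ⟨c, hc, hlarge⟩ := h
  have : Std.Symm fun A B : Set α ↦ c < μ (A ∆ B) := ⟨fun A B h ↦ by rwa [symmDiff_comm]⟩
  obtain ⟨M, hempty, hMS, hM, hmax⟩ := exists_maximal_pairwise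
    (X := {A | MeasurableSet A ∧ A ⊆ S}) (r := fun A B ↦ c < μ (A ∆ B))
    (singleton_subset_iff.2 ⟨.empty, empty_subset S⟩) (pairwise_singleton _ _)
  have hnet : IsMeasureNet μ S c M := ⟨hMS, fun E hE hES ↦ by
    obtain ⟨A, hA, rfl | hEA⟩ := hmax E ⟨hE, hES⟩
    exacts [⟨E, hA, by simp⟩, ⟨A, hA, not_lt.1 hEA⟩]⟩
  have hκM : κ ≤ #(M \ {∅} : Set (Set α)) := by
    by_contra! hlt
    exact ((le_mk_sdiff_add_mk M {∅}).trans_lt (add_lt_of_lt hκ hlt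
      ((mk_singleton _).trans_lt (one_lt_aleph0.trans_le hκ)))).not_ge (hlarge M hnet)
  obtain ⟨P, hPM, hP⟩ := le_mk_iff_exists_subset.1 hκM
  refine ⟨c, hc, P, hP, fun A hA ↦ ⟨(hMS (hPM hA).1).1, (hMS (hPM hA).1).2, ?_⟩,
    hM.mono fun A hA ↦ (hPM hA).1⟩
  simpa [← bot_eq_empty] using hM (hPM hA).1 (hempty rfl) (hPM hA).2

theorem not_isNetLarge_empty (hκ : ℵ₀ ≤ κ) : ¬ IsNetLarge μ ∅ κ := fun h ↦ by
  obtain ⟨E, hE, -, hEpos, -⟩ := h.exists_split .empty hκ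
  simp [subset_empty_iff.1 hE] at hEpos

theorem not_isNetLarge_union {A B : Set α} (hA : MeasurableSet A) (hκ : ℵ₀ ≤ κ)
    (hAκ : ¬ IsNetLarge μ A κ) (hBκ : ¬ IsNetLarge μ B κ) : ¬ IsNetLarge μ (A ∪ B) κ := by
  rw [not_isNetLarge_iff] at *
  intro c hc
  obtain ⟨DA, hDA, hDAκ⟩ := hAκ (c / 2) (ENNReal.half_pos hc.ne')
  obtain ⟨DB, hDB, hDBκ⟩ := hBκ (c / 2) (ENNReal.half_pos hc.ne')
  refine ⟨image2 (· ∪ ·) DA DB, ⟨?_, fun E hE hEAB ↦ ?_⟩,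
    mk_image2_le.trans_lt (mul_lt_of_lt hκ hDAκ hDBκ)⟩
  · rintro _ ⟨X, hX, Y, hY, rfl⟩
    exact ⟨(hDA.1 X hX).1.union (hDB.1 Y hY).1,
      union_subset_union (hDA.1 X hX).2 (hDB.1 Y hY).2⟩
  obtain ⟨X, hX, hEX⟩ := hDA.2 (E ∩ A) (hE.inter hA) inter_subset_right
  obtain ⟨Y, hY, hEY⟩ := hDB.2 (E \ A) (hE.diff hA) fun x hx ↦ (hEAB hx.1).resolve_left hx.2
  refine ⟨X ∪ Y, mem_image2_of_mem hX hY, ?_⟩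
  calc μ (E ∆ (X ∪ Y)) ≤ μ ((E ∩ A) ∆ X) + μ ((E \ A) ∆ Y) :=
        (measure_mono (symmDiff_union_subset_inter_sdiff E A X Y)).trans (measure_union_le _ _)
    _ ≤ c / 2 + c / 2 := add_le_add hEX hEY
    _ = c := ENNReal.add_halves c

theorem forall_isNetLarge_or_of_union {A B : Set α} (hA : MeasurableSet A)
    (hmono : Monotone τ) (hτ : ∀ m, ℵ₀ ≤ τ m) (h : ∀ m, IsNetLarge μ (A ∪ B) (τ m)) :
    (∀ m, IsNetLarge μ A (τ m)) ∨ ∀ m, IsNetLarge μ B (τ m) := by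
  by_contra! ⟨⟨m₁, h₁⟩, ⟨m₂, h₂⟩⟩
  exact not_isNetLarge_union hA (hτ _) (fun h ↦ h₁ (h.of_le (hmono (le_max_left m₁ m₂))))
    (fun h ↦ h₂ (h.of_le (hmono (le_max_right m₁ m₂)))) (h _)

variable [IsFiniteMeasure μ]

theorem not_isNetLarge_iUnion {W : ℕ → Set α} (hW : Monotone W)
    (hWm : ∀ n, MeasurableSet (W n)) (h : ∀ n, ¬ IsNetLarge μ (W n) κ) :
    ¬ IsNetLarge μ (⋃ n, W n) κ := by
  rw [not_isNetLarge_iff]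
  intro c hc
  have htail : Tendsto (fun n ↦ μ ((⋃ k, W k) \ W n)) atTop (𝓝 0) := by
    have := tendsto_measure_iInter_atTop (μ := μ)
      (fun n ↦ ((MeasurableSet.iUnion hWm).diff (hWm n)).nullMeasurableSet)
      (fun m n hmn ↦ sdiff_subset_sdiff_right (hW hmn)) ⟨0, measure_ne_top μ _⟩
    rwa [← sdiff_iUnion, sdiff_self, measure_empty] at this
  obtain ⟨N, hN⟩ := (htail.eventually_lt_const (ENNReal.half_pos hc.ne')).exists
  obtain ⟨D, hD, hDκ⟩ := not_isNetLarge_iff.1 (h N) (c / 2) (ENNReal.half_pos hc.ne')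
  refine ⟨D, ⟨fun A hA ↦ ⟨(hD.1 A hA).1, (hD.1 A hA).2.trans (subset_iUnion W N)⟩,
    fun E hE hEW ↦ ?_⟩, hDκ⟩
  obtain ⟨A, hA, hEA⟩ := hD.2 (E ∩ W N) (hE.inter (hWm N)) inter_subset_right
  have hsub : E ∆ A ⊆ ((E ∩ W N) ∆ A) ∪ ((⋃ k, W k) \ W N) := by
    have := symmDiff_union_subset_inter_sdiff E (W N) A ∅
    rw [union_empty, ← bot_eq_empty, symmDiff_bot] at this
    exact this.trans (union_subset_union_right _ (sdiff_subset_sdiff_left hEW))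
  refine ⟨A, hA, ?_⟩
  calc μ (E ∆ A) ≤ μ ((E ∩ W N) ∆ A) + μ ((⋃ k, W k) \ W N) :=
        (measure_mono hsub).trans (measure_union_le _ _)
    _ ≤ c / 2 + c / 2 := add_le_add hEA hN.le
    _ = c := ENNReal.add_halves c

/-- Exhaustion: `U` is a non-large part of `T` of maximal measure, so what is left of `T` is
hereditarily large. -/
theorem exists_not_isNetLarge_forall_isNetLarge_sdiff (T : Set α) (hκ : ℵ₀ ≤ κ) :
    ∃ U ⊆ T, MeasurableSet U ∧ ¬ IsNetLarge μ U κ ∧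
      ∀ P ⊆ T \ U, MeasurableSet P → 0 < μ P → IsNetLarge μ P κ := by
  set B := {V | V ⊆ T ∧ MeasurableSet V ∧ ¬ IsNetLarge μ V κ}
  have hB_union : ∀ V ∈ B, ∀ V' ∈ B, V ∪ V' ∈ B := fun V hV V' hV' ↦
    ⟨union_subset hV.1 hV'.1, hV.2.1.union hV'.2.1, not_isNetLarge_union hV.2.1 hκ hV.2.2 hV'.2.2⟩
  obtain ⟨u, -, hu, huB⟩ := exists_seq_tendsto_sSup
    ⟨_, mem_image_of_mem μ (show ∅ ∈ B from ⟨empty_subset T, .empty, not_isNetLarge_empty hκ⟩)⟩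
    (OrderTop.bddAbove _)
  choose W hWB hWu using huB
  have hacc : ∀ n, accumulate W n ∈ B := by
    intro n
    induction n with
    | zero => simpa using hWB 0
    | succ n ih => rw [accumulate_succ]; exact hB_union _ ih _ (hWB _)
  have hUB : (⋃ n, W n) ∈ B := by
    rw [← iUnion_accumulate]
    exact ⟨iUnion_subset fun n ↦ (hacc n).1, .iUnion fun n ↦ (hacc n).2.1,
      not_isNetLarge_iUnion monotone_accumulate (fun n ↦ (hacc n).2.1) fun n ↦ (hacc n).2.2⟩
  have hU_max : ∀ V ∈ B, μ V ≤ μ (⋃ n, W n) := fun V hV ↦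
    (le_sSup (mem_image_of_mem μ hV)).trans
      (le_of_tendsto' hu fun k ↦ hWu k ▸ measure_mono (subset_iUnion W k))
  refine ⟨_, hUB.1, hUB.2.1, hUB.2.2, fun P hPTU hP hPpos ↦ by_contra fun hPκ ↦ ?_⟩
  have hle := hU_max _ (hB_union _ hUB P ⟨hPTU.trans sdiff_subset, hP, hPκ⟩)
  rw [measure_union (disjoint_sdiff_right.mono_right hPTU) hP] at hle
  exact hPpos.ne' (nonpos_iff_eq_zero.1
    (ENNReal.le_of_add_le_add_left (measure_ne_top μ _) (hle.trans_eq (add_zero _).symm)))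

theorem exists_isNetLarge_split (hmono : Monotone τ) (hτ : ∀ m, ℵ₀ ≤ τ m)
    (hT : MeasurableSet T) (hTτ : ∀ m, IsNetLarge μ T (τ m)) (n : ℕ) :
    ∃ E ⊆ T, ∃ R ⊆ T, MeasurableSet E ∧ MeasurableSet R ∧ Disjoint E R ∧
      IsNetLarge μ E (τ n) ∧ ∀ m, IsNetLarge μ R (τ m) := by
  obtain ⟨U, hUT, hU, hUτ, hher⟩ := exists_not_isNetLarge_forall_isNetLarge_sdiff (μ := μ) T (hτ n)
  have hR : ∀ m, IsNetLarge μ (T \ U) (τ m) :=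
    (forall_isNetLarge_or_of_union hU hmono hτ (by rwa [union_sdiff_cancel hUT])).resolve_left
      fun h ↦ hUτ (h n)
  obtain ⟨E, hER, hE, hEpos, hREpos⟩ := (hR n).exists_split (hT.diff hU) (hτ n)
  have hRE : MeasurableSet ((T \ U) \ E) := (hT.diff hU).diff hE
  rcases forall_isNetLarge_or_of_union hE hmono hτ (by rwa [union_sdiff_cancel hER]) with h | h
  · exact ⟨_, sdiff_subset.trans sdiff_subset, E, hER.trans sdiff_subset, hRE, hE,
      disjoint_sdiff_left, hher _ sdiff_subset hRE hREpos, h⟩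
  · exact ⟨E, hER.trans sdiff_subset, _, sdiff_subset.trans sdiff_subset, hE, hRE,
      disjoint_sdiff_right, hher E hER hE hEpos, h⟩

theorem exists_pairwise_disjoint_isNetLarge (hmono : Monotone τ) (hτ : ∀ m, ℵ₀ ≤ τ m)
    (h : ∀ m, IsNetLarge μ univ (τ m)) :
    ∃ S : ℕ → Set α, Pairwise (Disjoint on S) ∧ ∀ n, IsNetLarge μ (S n) (τ n) := by
  choose! E hET R hRT hE hR hER hEτ hRτ using
    fun n T (hT : MeasurableSet T) (hTτ : ∀ m, IsNetLarge μ T (τ m)) ↦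
      exists_isNetLarge_split hmono hτ hT hTτ n
  let T : ℕ → Set α := fun n ↦ Nat.rec univ (fun k Tk ↦ R k Tk) n
  have hT : ∀ n, MeasurableSet (T n) ∧ ∀ m, IsNetLarge μ (T n) (τ m) := by
    intro n
    induction n with
    | zero => exact ⟨.univ, h⟩
    | succ n ih => exact ⟨hR n _ ih.1 ih.2, hRτ n _ ih.1 ih.2⟩
  have hanti : Antitone T := antitone_nat_of_succ_le fun n ↦ hRT n _ (hT n).1 (hT n).2
  refine ⟨fun n ↦ E n (T n), (pairwise_disjoint_on _).2 fun i j hij ↦ ?_,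
    fun n ↦ hEτ n _ (hT n).1 (hT n).2⟩
  exact (hER i _ (hT i).1 (hT i).2).mono_right
    ((hET j _ (hT j).1 (hT j).2).trans (hanti (Nat.succ_le_of_lt hij)))

end NetLarge

section ContinuousMap

variable {K : Type*} [TopologicalSpace K] [CompactSpace K] [MeasurableSpace K] {μ : Measure K}

def IsSignApprox (μ : Measure K) (A : Set K) (η : ℝ≥0∞) (f : C(K, ℝ)) : Prop :=
  ‖f‖ = 1 ∧ μ {x | x ∈ A ∧ f x ≠ 1} ≤ η ∧ μ {x | x ∉ A ∧ f x ≠ -1} ≤ η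

theorem exists_isSignApprox [T2Space K] [OpensMeasurableSpace K] [IsFiniteMeasure μ]
    [μ.InnerRegularCompactLTTop] {A : Set K} (hA : MeasurableSet A) {η : ℝ≥0∞} (hη : 0 < η)
    (hAη : η < μ A) : ∃ f, IsSignApprox μ A η f := by
  obtain ⟨F, hFA, hF, hAF⟩ := hA.exists_isCompact_sdiff_lt (measure_ne_top μ A) hη.ne'
  obtain ⟨G, hGA, hG, hAG⟩ := hA.compl.exists_isCompact_sdiff_lt (measure_ne_top μ _) hη.ne'
  obtain ⟨g, hgG, hgF, hg⟩ := exists_continuous_zero_one_of_isClosed hG.isClosed hF.isClosed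
    (disjoint_compl_left.mono hGA hFA)
  set f : C(K, ℝ) := (2 : ℝ) • g - 1
  have hf : ∀ x, f x = 2 * g x - 1 := fun x ↦ by simp [f]
  have hfF : ∀ x ∈ F, f x = 1 := fun x hx ↦ by simp [hf, hgF hx]; norm_num
  have hfG : ∀ x ∈ G, f x = -1 := fun x hx ↦ by simp [hf, hgG hx]
  obtain ⟨x₀, hx₀⟩ : F.Nonempty := nonempty_iff_ne_empty.2 fun hF0 ↦
    (hAη.trans_le (by simpa [hF0] using hAF.le)).false
  refine ⟨f, le_antisymm ?_ ?_, (measure_mono ?_).trans hAF.le, (measure_mono ?_).trans hAG.le⟩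
  · refine (ContinuousMap.norm_le f zero_le_one).2 fun x ↦ ?_
    rw [Real.norm_eq_abs, abs_le, hf]
    constructor <;> linarith [(hg x).1, (hg x).2]
  · simpa [hfF x₀ hx₀] using f.norm_coe_le_norm x₀
  · exact fun x hx ↦ ⟨hx.1, fun hxF ↦ hx.2 (hfF x hxF)⟩
  · exact fun x hx ↦ ⟨hx.1, fun hxG ↦ hx.2 (hfG x hxG)⟩

namespace IsSignApprox

variable {A B : Set K} {η η' : ℝ≥0∞} {f g : C(K, ℝ)}

theorem two_le_norm_sub (hf : IsSignApprox μ A η f) (hg : IsSignApprox μ B η' g)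
    (h : η + η' < μ (A \ B)) : 2 ≤ ‖f - g‖ := by
  obtain ⟨x, hx, hfx, hgx⟩ : ∃ x ∈ A \ B, f x = 1 ∧ g x = -1 := by
    by_contra! hbad
    refine h.not_ge ((measure_mono fun x hx ↦ ?_).trans
      ((measure_union_le _ _).trans (add_le_add hf.2.1 hg.2.2)))
    by_cases hfx : f x = 1
    exacts [Or.inr ⟨hx.2, hbad x hx hfx⟩, Or.inl ⟨hx.1, hfx⟩]
  calc (2 : ℝ) = ‖(f - g) x‖ := by norm_num [hfx, hgx]
    _ ≤ ‖f - g‖ := (f - g).norm_coe_le_norm x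

theorem two_le_norm_sub_of_symmDiff (hf : IsSignApprox μ A η f) (hg : IsSignApprox μ B η' g)
    (h : 2 * (η + η') < μ (A ∆ B)) : 2 ≤ ‖f - g‖ := by
  rcases lt_or_ge (η + η') (μ (A \ B)) with hAB | hAB
  · exact hf.two_le_norm_sub hg hAB
  rcases lt_or_ge (η' + η) (μ (B \ A)) with hBA | hBA
  · rw [norm_sub_rev]
    exact hg.two_le_norm_sub hf hBA
  refine absurd h (not_lt.2 ((measure_union_le _ _).trans ?_))
  rw [two_mul]
  exact add_le_add hAB (hBA.trans_eq (add_comm _ _))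

end IsSignApprox

theorem exists_two_separated_of_isNetLarge [T2Space K] [OpensMeasurableSpace K]
    [IsFiniteMeasure μ] [μ.InnerRegularCompactLTTop] {S : ℕ → Set K}
    (hS : Pairwise (Disjoint on S)) {τ : ℕ → Cardinal} (hτ : ∀ n, ℵ₀ ≤ τ n)
    (hSτ : ∀ n, IsNetLarge μ (S n) (τ n)) :
    ∃ A : Set C(K, ℝ), #A = sum τ ∧ (∀ f ∈ A, ‖f‖ = 1) ∧
      ∀ f ∈ A, ∀ g ∈ A, f ≠ g → 2 ≤ ‖f - g‖ := by
  choose c hc P hPτ hP hPsep using fun n ↦ (hSτ n).exists_separated (hτ n)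
  have hquarter : ∀ a : ℝ≥0∞, 2 * (a / 4 + a / 4) = a := fun a ↦ by
    rw [← two_mul, ← mul_assoc, show (2 : ℝ≥0∞) * 2 = 4 by norm_num,
      ENNReal.mul_div_cancel (by norm_num) (by norm_num)]
  have hsep : ∀ i j : Σ n, P n, i ≠ j → max (c i.1) (c j.1) < μ (i.2 ∆ j.2) := by
    rintro ⟨n, A, hA⟩ ⟨m, B, hB⟩ hij
    obtain rfl | hnm := eq_or_ne n m
    · exact (max_self _).trans_lt (hPsep n hA hB fun h ↦ hij (by subst h; rfl))
    rw [((hS hnm).mono (hP n A hA).2.1 (hP m B hB).2.1).symmDiff_eq_sup]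
    exact max_lt ((hP n A hA).2.2.trans_le (measure_mono subset_union_left))
      ((hP m B hB).2.2.trans_le (measure_mono subset_union_right))
  choose f hf using fun i : Σ n, P n ↦ exists_isSignApprox (hP i.1 _ i.2.2).1
    (ENNReal.div_pos (hc i.1).ne' (by norm_num))
    ((le_self_add.trans (le_mul_of_one_le_left' one_le_two)).trans_eq (hquarter _) |>.trans_lt
      (hP i.1 _ i.2.2).2.2)
  have hf_sep : ∀ i j, i ≠ j → 2 ≤ ‖f i - f j‖ := by
    refine fun i j hij ↦ (hf i).two_le_norm_sub_of_symmDiff (hf j)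
      (lt_of_le_of_lt ?_ (hsep i j hij))
    calc 2 * (c i.1 / 4 + c j.1 / 4)
        ≤ 2 * (max (c i.1) (c j.1) / 4 + max (c i.1) (c j.1) / 4) := by
          gcongr
          exacts [le_max_left _ _, le_max_right _ _]
      _ = max (c i.1) (c j.1) := hquarter _
  have hf_inj : Injective f := fun i j hij ↦ by_contra fun hne ↦
    absurd (hf_sep i j hne) (by norm_num [hij])
  refine ⟨range f, ?_, forall_mem_range.2 fun i ↦ (hf i).1, ?_⟩
  · rw [mk_range_eq f hf_inj, mk_sigma]
    exact congrArg sum (funext hPτ)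
  · rintro _ ⟨i, rfl⟩ _ ⟨j, rfl⟩ hij
    exact hf_sep i j fun h ↦ hij (h ▸ rfl)

end ContinuousMap

end MeasureTheory

theorem separated_of_nonseparable_L1_general
    (K : Type*) [TopologicalSpace K] [CompactSpace K] [T2Space K]
    [MeasurableSpace K] [BorelSpace K]
    (μ : Measure K) [μ.Regular]
    (hnonsep : ¬ TopologicalSpace.SeparableSpace (Lp ℝ 1 μ))
    (δ : ℝ) (hδ : δ < Real.sqrt 2 - 1) :
    ∃ A : Set C(K, ℝ), #A = densityCharacter (Lp ℝ 1 μ) ∧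
      (∀ f ∈ A, ‖f‖ = 1) ∧
      ∀ f ∈ A, ∀ g ∈ A, f ≠ g → 1 + δ ≤ ‖f - g‖ := by
  have hκ := aleph0_lt_densityCharacter hnonsep
  obtain ⟨τ, hmono, hτ, hτκ, hlarge, hκτ⟩ := exists_monotone_isNetLarge_univ hκ
  obtain ⟨S, hS, hSτ⟩ := exists_pairwise_disjoint_isNetLarge hmono hτ hlarge
  obtain ⟨A, hAcard, hAnorm, hAsep⟩ := exists_two_separated_of_isNetLarge hS hτ hSτ
  have hsum : sum τ = densityCharacter (Lp ℝ 1 μ) := by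
    rw [sum_eq_iSup_of_lift_mk_le_iSup (by simp) (by simpa using hκ.le.trans hκτ)]
    exact le_antisymm (ciSup_le' hτκ) hκτ
  have hδ2 : 1 + δ ≤ 2 := by
    have : Real.sqrt 2 < 2 := (Real.sqrt_lt' two_pos).2 (by norm_num)
    linarith
  exact ⟨A, hAcard.trans hsum, hAnorm, fun f hf g hg hfg ↦ hδ2.trans (hAsep f hf g hg hfg)⟩

/-- Let `K` be a compact Hausdorff space with a regular Borel (Radon) measure
`μ` such that `L¹(μ)` is non-separable.  Then for every `0 < δ < √2 − 1` there
is a set `A` of norm-one functions in `C(K)`, of cardinality `d(L¹(μ))`, with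
`‖f − g‖ ≥ 1 + δ` for all distinct `f, g ∈ A`. -/
theorem separated_of_nonseparable_L1
    (K : Type*) [TopologicalSpace K] [CompactSpace K] [T2Space K]
    [MeasurableSpace K] [BorelSpace K]
    (μ : Measure K) [μ.Regular]
    (hnonsep : ¬ TopologicalSpace.SeparableSpace (Lp ℝ 1 μ))
    (δ : ℝ) (hδ0 : 0 < δ) (hδ : δ < Real.sqrt 2 - 1) :
    ∃ A : Set C(K, ℝ), #A = densityCharacter (Lp ℝ 1 μ) ∧
      (∀ f ∈ A, ‖f‖ = 1) ∧
      ∀ f ∈ A, ∀ g ∈ A, f ≠ g → 1 + δ ≤ ‖f - g‖ :=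
  separated_of_nonseparable_L1_general K μ hnonsep δ hδ
end

section
/- Let K be a compact Hausdorff space that is not perfectly normal, i.e., K has a closed subset that is not a Gδ set. Then there exists an uncountable set A of norm-one functions in C(K) with ‖f − g‖ = 2 for all distinct f, g ∈ A (an uncountable 2-separated, hence 2-equilateral, subset of the unit sphere). -/
/-!
Fix a closed set `F` that is not `Gδ` and consider the functions of norm at most one that equal
`-1` on `F`. If `A` is a countable family of such functions, the set where all of them equal `-1`
is a `Gδ` containing `F`, so it contains a point `y ∉ F`; an Urysohn function that is `-1` on `F`
and `1` at `y` then lies at distance `2` from every member of `A`. Hence a maximal `2`-separated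
family of such functions (Zorn) cannot be countable.
-/

open Set

theorem ContinuousMap.isGδ_preimage_singleton {X : Type*} [TopologicalSpace X] (f : C(X, ℝ))
    (c : ℝ) : IsGδ (f ⁻¹' {c}) :=
  isClosed_singleton.isGδ.preimage f.continuous

theorem exists_notMem_forall_apply_eq_of_not_isGδ {X : Type*} [TopologicalSpace X] {F : Set X}
    (hF : ¬IsGδ F) {A : Set C(X, ℝ)} (hA : A.Countable) {c : ℝ}
    (hAF : ∀ f ∈ A, EqOn f (fun _ => c) F) : ∃ y ∉ F, ∀ f ∈ A, f y = c := by
  have hS : IsGδ (⋂ f ∈ A, f ⁻¹' {c}) := .biInter hA fun f _ => f.isGδ_preimage_singleton c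
  have hFS : F ⊆ ⋂ f ∈ A, f ⁻¹' {c} := fun x hx => mem_iInter₂.2 fun f hf => hAF f hf hx
  obtain ⟨y, hyS, hyF⟩ := exists_of_ssubset (hFS.ssubset_of_ne fun h => hF (h ▸ hS))
  exact ⟨y, hyF, fun f hf => mem_iInter₂.1 hyS f hf⟩

theorem exists_maximal_subset_pairwise {α : Type*} (D : Set α) (r : α → α → Prop) :
    ∃ A, Maximal (fun A => A ⊆ D ∧ A.Pairwise r) A :=
  zorn_subset _ fun c hcS hc =>
    ⟨⋃₀ c, ⟨sUnion_subset fun _ hA => (hcS hA).1,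
      (pairwise_sUnion hc.directedOn).2 fun _ hA => (hcS hA).2⟩,
      fun _ hA => subset_sUnion_of_mem hA⟩

section CompactSpace

variable {K : Type*} [TopologicalSpace K] [CompactSpace K]

def closedBallNegOneOn (F : Set K) : Set C(K, ℝ) :=
  {f | ‖f‖ ≤ 1 ∧ EqOn f (-1) F}

theorem norm_eq_one_of_mem_closedBallNegOneOn {F : Set K} (hF : F.Nonempty) {f : C(K, ℝ)}
    (hf : f ∈ closedBallNegOneOn F) : ‖f‖ = 1 := by
  obtain ⟨x, hx⟩ := hF
  refine le_antisymm hf.1 ?_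
  calc (1 : ℝ) = ‖f x‖ := by simp [hf.2 hx]
    _ ≤ ‖f‖ := f.norm_coe_le_norm x

theorem ContinuousMap.norm_sub_eq_two {f g : C(K, ℝ)} (hf : ‖f‖ ≤ 1) (hg : ‖g‖ ≤ 1) {y : K}
    (hfy : f y = 1) (hgy : g y = -1) : ‖f - g‖ = 2 := by
  refine le_antisymm ((norm_sub_le f g).trans (by linarith)) ?_
  calc (2 : ℝ) = ‖(f - g) y‖ := by norm_num [hfy, hgy]
    _ ≤ ‖f - g‖ := (f - g).norm_coe_le_norm y

theorem exists_mem_closedBallNegOneOn_apply_eq_one [T4Space K] {F : Set K} (hF : IsClosed F)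
    {y : K} (hy : y ∉ F) : ∃ g ∈ closedBallNegOneOn F, g y = 1 := by
  obtain ⟨u, hu0, hu1, hu01⟩ := exists_continuous_zero_one_of_isClosed hF isClosed_singleton
    (disjoint_singleton_right.2 hy)
  refine ⟨(2 : ℝ) • u - 1,
    ⟨(ContinuousMap.norm_le _ zero_le_one).2 fun x => ?_, fun x hx => ?_⟩, ?_⟩
  · have := hu01 x
    rw [Real.norm_eq_abs, abs_le]
    simp only [ContinuousMap.sub_apply, ContinuousMap.smul_apply, ContinuousMap.one_apply,
      smul_eq_mul]
    constructor <;> linarith [this.1, this.2]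
  · simp [hu0 hx]
  · norm_num [hu1 rfl]

theorem exists_mem_closedBallNegOneOn_forall_norm_sub_eq_two [T4Space K] {F : Set K}
    (hFc : IsClosed F) (hF : ¬IsGδ F) {A : Set C(K, ℝ)} (hA : A.Countable)
    (hAF : A ⊆ closedBallNegOneOn F) :
    ∃ g ∈ closedBallNegOneOn F, ∀ f ∈ A, ‖g - f‖ = 2 := by
  obtain ⟨y, hyF, hAy⟩ :=
    exists_notMem_forall_apply_eq_of_not_isGδ hF hA (c := -1) fun f hf => (hAF hf).2
  obtain ⟨g, hg, hgy⟩ := exists_mem_closedBallNegOneOn_apply_eq_one hFc hyF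
  exact ⟨g, hg, fun f hf => ContinuousMap.norm_sub_eq_two hg.1 (hAF hf).1 hgy (hAy f hf)⟩

theorem exists_not_countable_subset_closedBallNegOneOn_pairwise [T4Space K] {F : Set K}
    (hFc : IsClosed F) (hF : ¬IsGδ F) :
    ∃ A ⊆ closedBallNegOneOn F, ¬A.Countable ∧ A.Pairwise fun f g => ‖f - g‖ = 2 := by
  obtain ⟨A, hA⟩ := exists_maximal_subset_pairwise (closedBallNegOneOn F)
    fun f g : C(K, ℝ) => ‖f - g‖ = 2
  refine ⟨A, hA.prop.1, fun hAc => ?_, hA.prop.2⟩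
  obtain ⟨g, hg, hgA⟩ :=
    exists_mem_closedBallNegOneOn_forall_norm_sub_eq_two hFc hF hAc hA.prop.1
  have hinsert : insert g A ⊆ closedBallNegOneOn F ∧
      (insert g A).Pairwise fun f g : C(K, ℝ) => ‖f - g‖ = 2 :=
    ⟨insert_subset hg hA.prop.1, hA.prop.2.insert fun f hf _ =>
      ⟨hgA f hf, by rw [norm_sub_rev]; exact hgA f hf⟩⟩
  have hgA' : g ∈ A := hA.eq_of_subset hinsert (subset_insert g A) ▸ mem_insert g A
  simpa using hgA g hgA'

end CompactSpace

/-- Let `K` be a compact Hausdorff space that is not perfectly normal, i.e.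
`K` has a closed subset that is not a `Gδ` set.  Then there exists an
uncountable set `A` of norm-one functions in `C(K)` with `‖f − g‖ = 2` for all
distinct `f, g ∈ A`. -/
theorem uncountable_equilateral_of_not_perfectly_normal
    (K : Type*) [TopologicalSpace K] [CompactSpace K] [T2Space K]
    (hK : ∃ F : Set K, IsClosed F ∧ ¬ IsGδ F) :
    ∃ A : Set C(K, ℝ), ¬ A.Countable ∧ (∀ f ∈ A, ‖f‖ = 1) ∧
      ∀ f ∈ A, ∀ g ∈ A, f ≠ g → ‖f - g‖ = 2 := by
  obtain ⟨F, hFc, hF⟩ := hK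
  have hFne : F.Nonempty := nonempty_iff_ne_empty.2 fun h => hF (h ▸ .empty)
  obtain ⟨A, hAF, hA, hpair⟩ := exists_not_countable_subset_closedBallNegOneOn_pairwise hFc hF
  exact ⟨A, hA, fun f hf => norm_eq_one_of_mem_closedBallNegOneOn hFne (hAF hf),
    fun f hf g hg hfg => hpair hf hg hfg⟩
end

section
/- Let Γ be a set of cardinality 𝔠⁺, the successor cardinal of the continuum. Then every set A of norm-one elements of c₀(Γ) satisfying ‖f − g‖ > 1 for all distinct f, g ∈ A has cardinality at most 𝔠. -/
/-!
Elements of `c₀(Γ)` have countable support, and if `f`, `g` agree wherever both are nonzero then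
`‖f - g‖ ≤ max ‖f‖ ‖g‖`; so it suffices that among more than `𝔠` countably supported real
functions two agree on their common support. To find them, close a set of coordinates along an
`ω₁`-chain: at each stage pick, for each of the at most `𝔠` restrictions of the family to the
current set `T`, one member with that restriction, and add its support. A member `g` that is never
picked meets the union `S` of the chain in a countable set, which lies in a single stage `T`; the
member `f` picked for `g|T` agrees with `g` on `T` and is supported in `S`, so `f` and `g` can both
be nonzero only on `supp g ∩ S ⊆ T`.
-/

open ZeroAtInfty Cardinal

open Function Ordinal Set

universe u

theorem Cardinal.mk_biUnion_le_of_forall_le {ι α : Type u} {κ : Cardinal} (hκ : ℵ₀ ≤ κ)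
    (A : ι → Set α) {s : Set ι} (hs : #s ≤ κ) (hA : ∀ i ∈ s, #(A i) ≤ κ) :
    #(⋃ i ∈ s, A i) ≤ κ :=
  calc #(⋃ i ∈ s, A i) ≤ #s * ⨆ i : s, #(A i) := mk_biUnion_le A s
    _ ≤ κ * κ := mul_le_mul' hs (ciSup_le' fun i => hA i.1 i.2)
    _ = κ := mul_eq_self hκ

theorem mk_countable_support_le_continuum {T : Type*} (hT : #T ≤ 𝔠) :
    #{r : T → ℝ // (support r).Countable} ≤ 𝔠 := by
  let graph (r : {r : T → ℝ // (support r).Countable}) : {s : Set (T × ℝ) // #s ≤ ℵ₀} :=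
    ⟨{p | r.1 p.1 = p.2 ∧ p.2 ≠ 0}, by
      refine le_aleph0_iff_set_countable.2 ((r.2.image fun x => (x, r.1 x)).mono ?_)
      rintro ⟨x, y⟩ ⟨hxy : r.1 x = y, hy⟩
      subst hxy
      exact ⟨x, hy, rfl⟩⟩
  have graph_injective : Injective graph := fun r s h => Subtype.ext <| funext fun x => by
    have key : ∀ y ≠ 0, r.1 x = y ↔ s.1 x = y := fun y hy => by
      simpa [graph, hy] using Set.ext_iff.1 (congrArg Subtype.val h) (x, y)
    by_cases hr : r.1 x = 0
    · by_cases hs : s.1 x = 0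
      · rw [hr, hs]
      · exact (key _ hs).2 rfl
    · exact ((key _ hr).1 rfl).symm
  calc #{r : T → ℝ // (support r).Countable} ≤ max #(T × ℝ) ℵ₀ ^ ℵ₀ :=
        (mk_le_of_injective graph_injective).trans (mk_bounded_set_le _ _)
    _ ≤ 𝔠 ^ ℵ₀ := by
        refine power_le_power_right (max_le ?_ aleph0_le_continuum)
        rw [mk_prod, Cardinal.lift_id'.{0}, mk_real, lift_continuum]
        exact (mul_le_mul_left hT _).trans_eq (mul_eq_self aleph0_le_continuum)
    _ = 𝔠 := continuum_power_aleph0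

section UnionIterate

variable {α : Type u} (E : Set α → Set α)

noncomputable def unionIterate : Ordinal.{u} → Set α :=
  wellFounded_lt.fix fun o IH => ⋃ (p) (hp : p < o), E (IH p hp)

theorem unionIterate_eq (o : Ordinal.{u}) :
    unionIterate E o = ⋃ p < o, E (unionIterate E p) :=
  wellFounded_lt.fix_eq _ o

theorem subset_unionIterate {p o : Ordinal.{u}} (h : p < o) :
    E (unionIterate E p) ⊆ unionIterate E o := by
  rw [unionIterate_eq E o]
  exact subset_biUnion_of_mem (u := fun p => E (unionIterate E p)) h

theorem mk_unionIterate_le {κ : Cardinal.{u}} (hκ : ℵ₀ ≤ κ)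
    (hE : ∀ T : Set α, #T ≤ κ → #(E T) ≤ κ) {o : Ordinal.{u}} (ho : o.card ≤ κ) :
    #(unionIterate E o) ≤ κ := by
  induction o using WellFoundedLT.induction with
  | _ o IH =>
    rw [unionIterate_eq]
    exact mk_biUnion_le_of_le ho hκ _ fun p hp =>
      hE _ (IH p hp ((card_le_card hp.le).trans ho))

theorem exists_lt_omega_one_subset_unionIterate (hE : ∀ T, T ⊆ E T) {C : Set α}
    (hC : C.Countable) (hCE : C ⊆ ⋃ o < ω₁, unionIterate E o) :
    ∃ o < ω₁, C ⊆ unionIterate E o := by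
  have hmem : ∀ x : C, ∃ o < ω₁, (x : α) ∈ unionIterate E o := fun x => by
    simpa using hCE x.2
  choose stage hstage hx using hmem
  have := hC.to_subtype
  have hsup : ⨆ x, stage x < ω₁ := iSup_lt_omega_one hstage
  refine ⟨(⨆ x, stage x) + 1, (isSuccLimit_omega 1).add_one_lt hsup, fun x hxC => ?_⟩
  have hlt : stage ⟨x, hxC⟩ < (⨆ x, stage x) + 1 :=
    Order.lt_add_one_iff.2 (le_ciSup Ordinal.bddAbove_of_small _)
  exact subset_unionIterate E hlt (hE _ (hx ⟨x, hxC⟩))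

end UnionIterate

section Representatives

variable {ι α : Type u} [Nonempty ι] (F : ι → α → ℝ)

noncomputable def restrictRep (T : Set α) (i : ι) : ι :=
  invFun (fun j => T.domRestrict (F j)) (T.domRestrict (F i))

theorem domRestrict_restrictRep (T : Set α) (i : ι) :
    T.domRestrict (F (restrictRep F T i)) = T.domRestrict (F i) :=
  invFun_eq (f := fun j => T.domRestrict (F j)) ⟨i, rfl⟩

theorem mk_range_restrictRep_le (hF : ∀ i, (support (F i)).Countable) {T : Set α}
    (hT : #T ≤ 𝔠) : #(range (restrictRep F T)) ≤ 𝔠 := by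
  have hrange : range (fun i => T.domRestrict (F i)) ⊆ {r | (support r).Countable} := by
    rintro _ ⟨i, rfl⟩
    exact (hF i).preimage Subtype.val_injective
  calc #(range (restrictRep F T))
      = #(invFun (fun j => T.domRestrict (F j)) '' range (fun i => T.domRestrict (F i))) := by
        rw [← range_comp]; rfl
    _ ≤ #(range (fun i => T.domRestrict (F i))) := mk_image_le
    _ ≤ #{r : T → ℝ // (support r).Countable} := mk_le_mk_of_subset hrange
    _ ≤ 𝔠 := mk_countable_support_le_continuum hT

end Representatives

theorem exists_ne_forall_eq_or_eq_zero_of_continuum_lt {ι α : Type u} (F : ι → α → ℝ)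
    (hF : ∀ i, (support (F i)).Countable) (hι : 𝔠 < #ι) :
    ∃ i j, i ≠ j ∧ ∀ x, F i x = F j x ∨ F i x = 0 ∨ F j x = 0 := by
  have : Nonempty ι := mk_ne_zero_iff.1 (ne_zero_of_lt hι)
  let E (T : Set α) : Set α := T ∪ ⋃ j ∈ range (restrictRep F T), support (F j)
  have hE : ∀ T : Set α, #T ≤ 𝔠 → #(E T) ≤ 𝔠 := fun T hT =>
    calc #(E T) ≤ 𝔠 + 𝔠 := (mk_union_le _ _).trans <| add_le_add hT <|
          mk_biUnion_le_of_forall_le aleph0_le_continuum _ (mk_range_restrictRep_le F hF hT)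
            fun j _ => (hF j).le_aleph0.trans aleph0_le_continuum
      _ = 𝔠 := add_eq_self aleph0_le_continuum
  have hstage : ∀ o < ω₁, #(unionIterate E o) ≤ 𝔠 := fun o ho =>
    mk_unionIterate_le E aleph0_le_continuum hE <| by
      rw [← ord_aleph, lt_ord] at ho
      exact (ho.trans_le aleph_one_le_continuum).le
  let S := ⋃ o < ω₁, unionIterate E o
  let R := ⋃ o < ω₁, range (restrictRep F (unionIterate E o))
  have hR : #R ≤ 𝔠 := mk_biUnion_le_of_le (by rw [card_omega]; exact aleph_one_le_continuum)
    aleph0_le_continuum _ fun o ho => mk_range_restrictRep_le F hF (hstage o ho)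
  obtain ⟨g, hgR⟩ : Rᶜ.Nonempty := compl_nonempty_of_mk_lt_mk (hR.trans_lt hι)
  obtain ⟨o, ho, hgo⟩ := exists_lt_omega_one_subset_unionIterate E (fun _ => subset_union_left)
    ((hF g).mono inter_subset_left) (inter_subset_right : support (F g) ∩ S ⊆ S)
  set T := unionIterate E o
  refine ⟨restrictRep F T g, g, fun h => hgR (mem_biUnion ho ⟨g, h⟩), fun x => ?_⟩
  by_contra! hx
  obtain ⟨hne, hfx, hgx⟩ := hx
  have hxS : x ∈ S := mem_biUnion ((isSuccLimit_omega 1).add_one_lt ho) <|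
    subset_unionIterate E (Order.lt_add_one_iff.2 le_rfl) <|
      subset_union_right (mem_biUnion (mem_range_self g) hfx)
  exact hne (congrFun (domRestrict_restrictRep F T g) ⟨x, hgo ⟨hgx, hxS⟩⟩)

theorem ZeroAtInftyContinuousMap.countable_support {Γ β : Type*} [TopologicalSpace Γ]
    [DiscreteTopology Γ] [TopologicalSpace β] [Zero β] [T1Space β] [FirstCountableTopology β]
    (f : C₀(Γ, β)) : (support f).Countable := by
  have h := ZeroAtInftyContinuousMapClass.zero_at_infty f
  rw [Filter.cocompact_eq_cofinite] at h
  have := h.countable_compl_preimage_ker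
  rwa [ker_nhds] at this

theorem ZeroAtInftyContinuousMap.norm_sub_le_max_of_forall_eq_or_eq_zero {Γ E : Type*}
    [TopologicalSpace Γ] [SeminormedAddCommGroup E] (f g : C₀(Γ, E))
    (h : ∀ x, f x = g x ∨ f x = 0 ∨ g x = 0) : ‖f - g‖ ≤ max ‖f‖ ‖g‖ := by
  refine (BoundedContinuousFunction.norm_le (le_max_of_le_left (norm_nonneg f))).2 fun x => ?_
  have hf : ‖f x‖ ≤ ‖f‖ := f.toBCF.norm_coe_le_norm x
  have hg : ‖g x‖ ≤ ‖g‖ := g.toBCF.norm_coe_le_norm x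
  change ‖f x - g x‖ ≤ _
  rcases h x with h | h | h
  · simp [h]
  · simpa [h] using le_max_of_le_right hg
  · simpa [h] using le_max_of_le_left hf

theorem separated_in_c0_continuum_succ_le_continuum_general
    (Γ : Type*) [TopologicalSpace Γ] [DiscreteTopology Γ]
    (A : Set C₀(Γ, ℝ))
    (hA : ∀ f ∈ A, ‖f‖ = 1)
    (hsep : ∀ f ∈ A, ∀ g ∈ A, f ≠ g → 1 < ‖f - g‖) :
    #A ≤ Cardinal.continuum := by
  by_contra! hA_big
  obtain ⟨f, g, hfg, hagree⟩ := exists_ne_forall_eq_or_eq_zero_of_continuum_lt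
    (fun f : A => ⇑(f : C₀(Γ, ℝ))) (fun f => f.1.countable_support) hA_big
  have hle := ZeroAtInftyContinuousMap.norm_sub_le_max_of_forall_eq_or_eq_zero f.1 g.1 hagree
  rw [hA f f.2, hA g g.2, max_self] at hle
  exact hle.not_gt (hsep f f.2 g g.2 (Subtype.coe_injective.ne hfg))

/-- Let `Γ` be a (discrete) set of cardinality `𝔠⁺`, the successor of the
continuum.  Then every set `A` of norm-one elements of `c₀(Γ)` with
`‖f − g‖ > 1` for all distinct `f, g ∈ A` has cardinality at most `𝔠`. -/
theorem separated_in_c0_continuum_succ_le_continuum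
    (Γ : Type*) [TopologicalSpace Γ] [DiscreteTopology Γ]
    (hΓ : #Γ = Order.succ Cardinal.continuum)
    (A : Set C₀(Γ, ℝ))
    (hA : ∀ f ∈ A, ‖f‖ = 1)
    (hsep : ∀ f ∈ A, ∀ g ∈ A, f ≠ g → 1 < ‖f - g‖) :
    #A ≤ Cardinal.continuum :=
  separated_in_c0_continuum_succ_le_continuum_general Γ A hA hsep
end
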